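/- arXiv:1711.04136 — 9 statements merged into one kernel-verified Lean document; each statement's English description precedes it below -/
import Mathlib

section
/- If a series ∑xₙ in a finite-dimensional real inner product space is *-potentially convergent (i.e., for every continuous linear functional f there is a permutation σ of ℕ such that ∑ f(x_{σ(n)}) converges), then the sequence (xₙ) converges to zero. -/
/-! Along any rearrangement making `∑ f (x (σ n))` converge, the terms `f (x (σ n))` tend to zero,
and undoing a permutation of `ℕ` preserves limits along `atTop`; hence `f (x n) → 0` for every
functional `f`. In finite dimension the coordinate functionals of a basis determine the topology,
so `x n → 0`. -/

open Filter Topology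

theorem Filter.Tendsto.tendsto_zero_of_sum_range {G : Type*} [AddCommGroup G] [TopologicalSpace G]
    [IsTopologicalAddGroup G] {u : ℕ → G} {a : G}
    (h : Tendsto (fun m => ∑ n ∈ Finset.range m, u n) atTop (𝓝 a)) :
    Tendsto u atTop (𝓝 0) := by
  have hdiff := (h.comp (tendsto_add_atTop_nat 1)).sub h
  simpa only [Function.comp_def, Finset.sum_range_succ, add_sub_cancel_left, sub_self] using hdiff

theorem Filter.Tendsto.of_comp_perm {β : Type*} {u : ℕ → β} {l : Filter β} (σ : Equiv.Perm ℕ)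
    (h : Tendsto (u ∘ σ) atTop l) : Tendsto u atTop l := by
  have hσ : Tendsto σ.symm atTop atTop := by
    rw [← Nat.cofinite_eq_atTop]
    exact σ.symm.injective.tendsto_cofinite
  simpa only [Function.comp_def, Equiv.apply_symm_apply] using h.comp hσ

theorem tendsto_of_forall_continuousLinearMap_tendsto {𝕜 E ι : Type*} [NontriviallyNormedField 𝕜]
    [CompleteSpace 𝕜] [NormedAddCommGroup E] [NormedSpace 𝕜 E] [FiniteDimensional 𝕜 E]
    {u : ι → E} {l : Filter ι} {a : E}
    (h : ∀ f : E →L[𝕜] 𝕜, Tendsto (fun i => f (u i)) l (𝓝 (f a))) :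
    Tendsto u l (𝓝 a) := by
  let e := (Module.finBasis 𝕜 E).equivFunL
  have hcoord : Tendsto (fun i => e (u i)) l (𝓝 (e a)) :=
    tendsto_pi_nhds.2 fun j => h ((ContinuousLinearMap.proj j).comp e.toContinuousLinearMap)
  simpa only [Function.comp_def, ContinuousLinearEquiv.symm_apply_apply] using
    (e.symm.continuous.tendsto (e a)).comp hcoord

theorem stmt0
    {X : Type*} [NormedAddCommGroup X] [InnerProductSpace ℝ X] [FiniteDimensional ℝ X]
    (x : ℕ → X)
    (hstar : ∀ f : X →L[ℝ] ℝ, ∃ σ : Equiv.Perm ℕ, ∃ r : ℝ,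
      Tendsto (fun m => ∑ n ∈ Finset.range m, f (x (σ n))) atTop (𝓝 r)) :
    Tendsto x atTop (𝓝 0) := by
  refine tendsto_of_forall_continuousLinearMap_tendsto (𝕜 := ℝ) fun f => ?_
  obtain ⟨σ, r, hσ⟩ := hstar f
  rw [map_zero]
  exact hσ.tendsto_zero_of_sum_range.of_comp_perm σ
end

section
/- Let (xₙ) be a sequence of nonzero vectors in a finite-dimensional real inner product space X with xₙ → 0. If the set D of divergence directions of the series ∑xₙ is empty, then ∑‖xₙ‖ < ∞, i.e., the series converges absolutely. -/
open Filter Topology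

/-- `z` is a divergence direction of the series `∑ x n`: `z` lies on the unit sphere and
for every neighborhood of `z` in the sphere (given by `ε`-balls), the set of indices whose
normalized terms fall in the neighborhood is infinite and the corresponding series of norms
diverges. -/
def IsDivergenceDirection {X : Type*} [NormedAddCommGroup X] [InnerProductSpace ℝ X]
    (x : ℕ → X) (z : X) : Prop :=
  ‖z‖ = 1 ∧ ∀ ε : ℝ, 0 < ε →
    {n : ℕ | dist (‖x n‖⁻¹ • x n) z < ε}.Infinite ∧
    ¬ Summable (fun n : {n : ℕ | dist (‖x n‖⁻¹ • x n) z < ε} => ‖x (n : ℕ)‖)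

theorem stmt2
    {X : Type*} [NormedAddCommGroup X] [InnerProductSpace ℝ X] [FiniteDimensional ℝ X]
    (x : ℕ → X) (hx : ∀ n, x n ≠ 0) (hx0 : Tendsto x atTop (𝓝 0))
    (hD : ∀ z : X, ¬ IsDivergenceDirection x z) :
    Summable (fun n => ‖x n‖) := by
  set y : ℕ → X := fun n => ‖x n‖⁻¹ • x n with hy_def
  have hy : ∀ n, ‖y n‖ = 1 := fun n => norm_smul_inv_norm (hx n)
  have key : ∀ z : X, ∃ ε > 0, ‖z‖ = 1 →
      Summable (fun n : {n : ℕ | dist (y n) z < ε} => ‖x (n : ℕ)‖) := by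
    intro z
    by_cases hz : ‖z‖ = 1
    · have h := hD z
      unfold IsDivergenceDirection at h
      push_neg at h
      obtain ⟨ε, hε, h⟩ := h hz
      refine ⟨ε, hε, fun _ => ?_⟩
      by_cases hfin : {n : ℕ | dist (y n) z < ε}.Finite
      · haveI := hfin.to_subtype
        exact Summable.of_finite
      · exact h hfin
    · exact ⟨1, one_pos, fun h => absurd h hz⟩
  choose ε hεpos hεsum using key
  have hcpt : IsCompact (Metric.sphere (0 : X) 1) := isCompact_sphere 0 1
  obtain ⟨t, hts, hcov⟩ := hcpt.elim_nhds_subcover (fun z => Metric.ball z (ε z))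
    (fun z _ => Metric.ball_mem_nhds z (hεpos z))
  set A : X → Set ℕ := fun z => {n : ℕ | dist (y n) z < ε z} with hA
  have hsummand : ∀ z ∈ t, Summable ((A z).indicator fun n => ‖x n‖) := by
    intro z hz
    exact (summable_subtype_iff_indicator).mp
      (hεsum z (mem_sphere_zero_iff_norm.mp (hts z hz)))
  refine Summable.of_nonneg_of_le (fun n => norm_nonneg _)
    (fun n => ?_) (summable_sum hsummand)
  have hn : y n ∈ Metric.sphere (0 : X) 1 := mem_sphere_zero_iff_norm.mpr (hy n)
  obtain ⟨z, hzt, hzb⟩ := Set.mem_iUnion₂.mp (hcov hn)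
  have hnA : n ∈ A z := Metric.mem_ball.mp hzb
  calc ‖x n‖ = (A z).indicator (fun n => ‖x n‖) n := by
        rw [Set.indicator_of_mem hnA]
    _ ≤ ∑ w ∈ t, (A w).indicator (fun n => ‖x n‖) n :=
        Finset.single_le_sum (fun w _ => Set.indicator_nonneg (fun _ _ => norm_nonneg _) n) hzt
end

section
/- Let (xₙ) be a sequence of nonzero vectors in a finite-dimensional real inner product space X such that the series ∑xₙ is *-potentially convergent. Then 0 lies in the convex hull of the set D of divergence directions of ∑xₙ, provided D is nonempty; more precisely, if D is nonempty and 0 ∉ conv(D), then ∑xₙ is not *-potentially convergent. -/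
/-!
`D` is compact, hence so is its convex hull, and a functional `f` separating `0` from `conv D`
is positive on `D`. The unit vectors on which `f ≤ 0` form a compact set without divergence
directions, so a finite cover by balls with summable norms shows that the negative part of
`∑ f (x n)` converges absolutely. Near a divergence direction `z` we have
`f (x n) ≥ (f z / 2) * ‖x n‖`, so `∑ f (x n)` itself diverges. Hence every rearrangement of
`∑ f (x n)` diverges to `+∞`.
-/

open Filter Topology

open Set

theorem IsCompact.convexHull {E : Type*} [AddCommGroup E] [Module ℝ E] [TopologicalSpace E]
    [ContinuousAdd E] [ContinuousSMul ℝ E] [FiniteDimensional ℝ E] {s : Set E}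
    (hs : IsCompact s) : IsCompact (_root_.convexHull ℝ s) := by
  let combinations (k : ℕ) : Set E :=
    (fun p : (Fin k → ℝ) × (Fin k → E) => ∑ i, p.1 i • p.2 i) ''
      (stdSimplex ℝ (Fin k) ×ˢ univ.pi fun _ => s)
  -- Carathéodory: every point of the hull is a convex combination of `finrank + 1` points of `s`.
  have hcover : _root_.convexHull ℝ s =
      ⋃ k ∈ Finset.range (Module.finrank ℝ E + 2), combinations k := by
    refine Subset.antisymm (fun y hy => ?_) (iUnion₂_subset fun k _ => ?_)
    · obtain ⟨ι, _, z, w, hzs, hz, hw0, hw1, rfl⟩ := eq_pos_convex_span_of_mem_convexHull hy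
      let e := (Fintype.equivFin ι).symm
      have hcard : Fintype.card ι < Module.finrank ℝ E + 2 := by
        have := Submodule.finrank_le (vectorSpan ℝ (Set.range z))
        have := hz.card_le_finrank_succ
        omega
      refine mem_biUnion (Finset.mem_range.mpr hcard) ⟨(w ∘ e, z ∘ e),
        ⟨⟨fun i => (hw0 _).le, ?_⟩, fun i _ => hzs (mem_range_self _)⟩,
        e.sum_comp fun i => w i • z i⟩
      simpa only [Function.comp_apply, e.sum_comp] using hw1
    · rintro _ ⟨⟨w, z⟩, ⟨⟨hw0, hw1⟩, hz⟩, rfl⟩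
      exact (convex_convexHull ℝ s).sum_mem (fun i _ => hw0 i) hw1
        fun i _ => subset_convexHull ℝ s (hz i (mem_univ i))
  rw [hcover]
  exact (Finset.range _).isCompact_biUnion fun k _ =>
    ((isCompact_stdSimplex ℝ (Fin k)).prod (isCompact_univ_pi fun _ => hs)).image (by fun_prop)

theorem summable_subtype_biUnion_of_nonneg {ι α : Type*} {f : α → ℝ} (hf : 0 ≤ f)
    (t : Finset ι) (S : ι → Set α) (hS : ∀ i ∈ t, Summable fun a : S i => f a) :
    Summable fun a : ⋃ i ∈ t, S i => f a := by
  have hsum : Summable fun a => ∑ i ∈ t, (S i).indicator f a :=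
    summable_sum fun i hi => summable_subtype_iff_indicator.mp (hS i hi)
  refine summable_subtype_iff_indicator.mpr <|
    hsum.of_nonneg_of_le (indicator_nonneg fun a _ => hf a) fun a => ?_
  by_cases ha : a ∈ ⋃ i ∈ t, S i
  · obtain ⟨i, hi, hai⟩ := mem_iUnion₂.mp ha
    calc (⋃ i ∈ t, S i).indicator f a = (S i).indicator f a := by
          rw [indicator_of_mem ha, indicator_of_mem hai]
      _ ≤ ∑ j ∈ t, (S j).indicator f a :=
          Finset.single_le_sum (fun j _ => indicator_nonneg (fun a _ => hf a) a) hi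
  · rw [indicator_of_notMem ha]
    exact Finset.sum_nonneg fun j _ => indicator_nonneg (fun a _ => hf a) a

theorem tendsto_sum_range_atTop_of_summable_negPart {a : ℕ → ℝ}
    (hneg : Summable fun n => (a n)⁻) (ha : ¬Summable a) :
    Tendsto (fun m => ∑ n ∈ Finset.range m, a n) atTop atTop := by
  have hpos : ¬Summable fun n => (a n)⁺ := fun h =>
    ha (by simpa only [posPart_sub_negPart] using h.sub hneg)
  refine tendsto_atTop_mono (fun m => ?_) (tendsto_atTop_add_const_right _ (-∑' n, (a n)⁻)
    ((not_summable_iff_tendsto_nat_atTop_of_nonneg fun n => posPart_nonneg _).mp hpos))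
  have hle := hneg.sum_le_tsum (Finset.range m) fun n _ => negPart_nonneg _
  calc ∑ n ∈ Finset.range m, (a n)⁺ + -∑' n, (a n)⁻
      ≤ ∑ n ∈ Finset.range m, (a n)⁺ - ∑ n ∈ Finset.range m, (a n)⁻ := by linarith
    _ = ∑ n ∈ Finset.range m, a n := by
      simp only [← Finset.sum_sub_distrib, posPart_sub_negPart]

theorem tendsto_sum_range_perm_atTop_of_summable_negPart {a : ℕ → ℝ}
    (hneg : Summable fun n => (a n)⁻) (ha : ¬Summable a) (σ : Equiv.Perm ℕ) :
    Tendsto (fun m => ∑ n ∈ Finset.range m, a (σ n)) atTop atTop :=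
  tendsto_sum_range_atTop_of_summable_negPart ((σ.summable_iff (f := fun n => (a n)⁻)).mpr hneg)
    fun h => ha (σ.summable_iff.mp h)

theorem apply_eq_norm_mul_apply_inv_norm_smul {E F : Type*} [NormedAddCommGroup E]
    [NormedSpace ℝ E] [FunLike F E ℝ] [LinearMapClass F ℝ E ℝ] (f : F) (v : E) :
    f v = ‖v‖ * f (‖v‖⁻¹ • v) := by
  rcases eq_or_ne v 0 with rfl | hv
  · simp
  rw [map_smul, smul_eq_mul, ← mul_assoc, mul_inv_cancel₀ (norm_ne_zero_iff.mpr hv), one_mul]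

section DivergenceDirection

variable {X : Type*} [NormedAddCommGroup X] [InnerProductSpace ℝ X] {x : ℕ → X}

theorem exists_summable_norm_of_not_isDivergenceDirection {z : X} (hz : ‖z‖ = 1)
    (h : ¬IsDivergenceDirection x z) :
    ∃ ε > 0, Summable fun n : {n : ℕ | dist (‖x n‖⁻¹ • x n) z < ε} => ‖x n‖ := by
  simp only [IsDivergenceDirection, hz, true_and, not_forall, not_and_or, not_not] at h
  obtain ⟨ε, hε, hfin | hsum⟩ := h
  · have := (not_infinite.mp hfin).to_subtype
    exact ⟨ε, hε, .of_finite⟩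
  · exact ⟨ε, hε, hsum⟩

theorem isClosed_setOf_isDivergenceDirection (x : ℕ → X) :
    IsClosed {z : X | IsDivergenceDirection x z} := by
  refine isClosed_iff_nhds.mpr fun z hz => ⟨?_, fun ε hε => ?_⟩
  · have hsphere : {z : X | IsDivergenceDirection x z} ⊆ Metric.sphere 0 1 := fun w hw => by
      simpa using hw.1
    simpa using Metric.isClosed_sphere.closure_subset_iff.mpr hsphere (mem_closure_iff_nhds.mpr hz)
  obtain ⟨w, hwz, hw⟩ := hz _ (Metric.ball_mem_nhds z (half_pos hε))
  have hsub : {n : ℕ | dist (‖x n‖⁻¹ • x n) w < ε / 2} ⊆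
      {n : ℕ | dist (‖x n‖⁻¹ • x n) z < ε} := fun n hn => by
    have htri := dist_triangle (‖x n‖⁻¹ • x n) w z
    have hwz' : dist w z < ε / 2 := hwz
    simp only [mem_ofPred_eq] at hn ⊢
    linarith
  obtain ⟨hinf, hns⟩ := hw.2 (ε / 2) (half_pos hε)
  exact ⟨hinf.mono hsub, fun h => hns (h.comp_injective (inclusion_injective hsub))⟩

theorem isCompact_setOf_isDivergenceDirection [FiniteDimensional ℝ X] (x : ℕ → X) :
    IsCompact {z : X | IsDivergenceDirection x z} :=
  (isCompact_sphere 0 1).of_isClosed_subset (isClosed_setOf_isDivergenceDirection x)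
    fun z hz => by simpa using hz.1

theorem summable_norm_of_isCompact_of_not_isDivergenceDirection {K : Set X} (hK : IsCompact K)
    (hK1 : K ⊆ Metric.sphere 0 1) (hKD : ∀ z ∈ K, ¬IsDivergenceDirection x z) :
    Summable fun n : {n : ℕ | ‖x n‖⁻¹ • x n ∈ K} => ‖x n‖ := by
  have hloc (z : X) (hz : z ∈ K) := exists_summable_norm_of_not_isDivergenceDirection
    (by simpa using hK1 hz) (hKD z hz)
  choose! ε hε hsum using hloc
  obtain ⟨t, htK, hcover⟩ := hK.elim_nhds_subcover (fun z => Metric.ball z (ε z))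
    fun z hz => Metric.ball_mem_nhds z (hε z hz)
  have hsub : {n : ℕ | ‖x n‖⁻¹ • x n ∈ K} ⊆
      ⋃ z ∈ t, {n : ℕ | dist (‖x n‖⁻¹ • x n) z < ε z} := fun n hn => by
    simpa using hcover hn
  exact (summable_subtype_biUnion_of_nonneg (fun n => norm_nonneg (x n)) t _
    fun z hz => hsum z (htK z hz)).comp_injective (inclusion_injective hsub)

theorem not_summable_of_pos_at_divergenceDirection (f : X →L[ℝ] ℝ) {z : X}
    (hz : IsDivergenceDirection x z) (hfz : 0 < f z) :
    ¬Summable fun n => f (x n) := by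
  obtain ⟨ε, hε, hnear⟩ := Metric.eventually_nhds_iff.mp
    (f.continuous.continuousAt.eventually (lt_mem_nhds (half_lt_self hfz)))
  intro hsum
  refine (hz.2 ε hε).2 (((hsum.subtype _).mul_left (2 / f z)).of_nonneg_of_le
    (fun n => norm_nonneg _) fun n => ?_)
  have hfn : f z / 2 < f (‖x n‖⁻¹ • x n) := hnear n.2
  rw [Function.comp_apply, apply_eq_norm_mul_apply_inv_norm_smul f (x n), div_mul_eq_mul_div,
    le_div_iff₀ hfz]
  nlinarith [norm_nonneg (x n)]

variable [FiniteDimensional ℝ X]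

theorem summable_negPart_of_pos_on_divergenceDirections (f : X →L[ℝ] ℝ)
    (hf : ∀ z, IsDivergenceDirection x z → 0 < f z) :
    Summable fun n => (f (x n))⁻ := by
  set K := Metric.sphere (0 : X) 1 ∩ {w | f w ≤ 0}
  have hK : IsCompact K :=
    (isCompact_sphere 0 1).inter_right (isClosed_le f.continuous continuous_const)
  have hKD : ∀ z ∈ K, ¬IsDivergenceDirection x z := fun z hz hzD => (hf z hzD).not_ge hz.2
  have hsum : Summable ({n | ‖x n‖⁻¹ • x n ∈ K}.indicator fun n => ‖x n‖) :=
    summable_subtype_iff_indicator.mp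
      (summable_norm_of_isCompact_of_not_isDivergenceDirection hK inter_subset_left hKD)
  refine (hsum.mul_left ‖f‖).of_nonneg_of_le (fun n => negPart_nonneg _) fun n => ?_
  rcases le_or_gt 0 (f (x n)) with hn | hn
  · rw [negPart_eq_zero.mpr hn]
    exact mul_nonneg (norm_nonneg f) (indicator_nonneg (fun _ _ => norm_nonneg _) n)
  have hxn : x n ≠ 0 := fun h => by simp [h] at hn
  have hnK : ‖x n‖⁻¹ • x n ∈ K := by
    refine ⟨by simp [norm_smul, hxn], ?_⟩
    rw [mem_ofPred_eq, map_smul, smul_eq_mul]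
    exact mul_nonpos_of_nonneg_of_nonpos (by positivity) hn.le
  rw [indicator_of_mem (show n ∈ {n | ‖x n‖⁻¹ • x n ∈ K} from hnK),
    negPart_eq_neg.mpr hn.le]
  exact (neg_le_abs _).trans (f.le_opNorm (x n))

end DivergenceDirection

theorem stmt3_general
    {X : Type*} [NormedAddCommGroup X] [InnerProductSpace ℝ X] [FiniteDimensional ℝ X]
    (x : ℕ → X)
    (hne : {z : X | IsDivergenceDirection x z}.Nonempty)
    (h0 : (0 : X) ∉ convexHull ℝ {z : X | IsDivergenceDirection x z}) :
    ¬ (∀ f : X →L[ℝ] ℝ, ∃ σ : Equiv.Perm ℕ, ∃ r : ℝ,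
        Tendsto (fun m => ∑ n ∈ Finset.range m, f (x (σ n))) atTop (𝓝 r)) := by
  intro H
  obtain ⟨z, hz⟩ := hne
  obtain ⟨f, c, hc0, hcD⟩ := geometric_hahn_banach_point_closed (convex_convexHull ℝ _)
    (isCompact_setOf_isDivergenceDirection x).convexHull.isClosed h0
  have hf : ∀ z, IsDivergenceDirection x z → 0 < f z := fun z hz =>
    (map_zero f ▸ hc0).trans (hcD z (subset_convexHull ℝ _ hz))
  obtain ⟨σ, r, hr⟩ := H f
  exact not_tendsto_nhds_of_tendsto_atTop (tendsto_sum_range_perm_atTop_of_summable_negPart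
    (summable_negPart_of_pos_on_divergenceDirections f hf)
    (not_summable_of_pos_at_divergenceDirection f hz (hf z hz)) σ) r hr

theorem stmt3
    {X : Type*} [NormedAddCommGroup X] [InnerProductSpace ℝ X] [FiniteDimensional ℝ X]
    (x : ℕ → X) (hx : ∀ n, x n ≠ 0)
    (hne : {z : X | IsDivergenceDirection x z}.Nonempty)
    (h0 : (0 : X) ∉ convexHull ℝ {z : X | IsDivergenceDirection x z}) :
    ¬ (∀ f : X →L[ℝ] ℝ, ∃ σ : Equiv.Perm ℕ, ∃ r : ℝ,
        Tendsto (fun m => ∑ n ∈ Finset.range m, f (x (σ n))) atTop (𝓝 r)) :=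
  stmt3_general x hne h0
end

section
/- Let z be a divergence direction of a series ∑xₙ of nonzero vectors tending to zero in a finite-dimensional real inner product space X, let X₀ be a linear subspace containing z, and let pr₁ be the orthogonal projection onto the orthogonal complement of X₀. Then there exists a set Ω_z ⊆ ℕ such that (1) ∑_{n∈Ω_z} ‖pr₁(xₙ)‖ < ∞, and (2) for every neighborhood U of z in the unit sphere S, the series ∑_{n∈Ω_z∩ℕ_U} ‖xₙ‖ diverges. -/
/-!
Choose, for every `k`, a finite block `F k` of indices `n ≥ k` whose directions `xₙ / ‖xₙ‖`
lie within `2⁻ᵏ` of `z` and whose total mass `∑ ‖xₙ‖` lies in `[1, 2]`; such a block exists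
because the mass near `z` is infinite while `‖xₙ‖ ≤ 1` eventually. Since `pr₁ z = 0`, the
projection satisfies `‖pr₁ xₙ‖ ≤ 2⁻ᵏ ‖xₙ‖` on `F k`, so `Ω = ⋃ₖ F k` carries projected mass
at most `∑ₖ 2 ⋅ 2⁻ᵏ`. Every neighbourhood of `z` contains all blocks `F k` with `k` large;
these have mass at least one each and escape to infinity, so the series over them diverges.
-/

open Filter Topology

open Finset

theorem norm_orthogonalProjectionOnto_le_dist_mul_norm {E : Type*} [NormedAddCommGroup E]
    [InnerProductSpace ℝ E] (K : Submodule ℝ E) [K.HasOrthogonalProjection] {z : E}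
    (hz : z ∈ Kᗮ) (v : E) :
    ‖(K.orthogonalProjectionOnto v : E)‖ ≤ dist (‖v‖⁻¹ • v) z * ‖v‖ := by
  rcases eq_or_ne v 0 with rfl | hv
  · simp
  have hPz : K.orthogonalProjectionOnto z = 0 := K.orthogonalProjectionOnto_eq_zero_iff.2 hz
  calc ‖(K.orthogonalProjectionOnto v : E)‖ = ‖K.orthogonalProjectionOnto (v - ‖v‖ • z)‖ := by
        rw [map_sub, map_smul, hPz, smul_zero, sub_zero, Submodule.coe_norm]
    _ ≤ ‖v - ‖v‖ • z‖ := K.norm_orthogonalProjectionOnto_apply_le _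
    _ = ‖‖v‖ • (‖v‖⁻¹ • v - z)‖ := by rw [smul_sub, smul_inv_smul₀ (norm_ne_zero_iff.2 hv)]
    _ = dist (‖v‖⁻¹ • v) z * ‖v‖ := by rw [norm_smul, norm_norm, dist_eq_norm, mul_comm]

theorem not_summable_indicator_inter_Ici {G : Type*} [AddCommGroup G] [TopologicalSpace G]
    [IsTopologicalAddGroup G] {S : Set ℕ} {f : ℕ → G} (hS : ¬ Summable (S.indicator f))
    (N : ℕ) : ¬ Summable ((S ∩ Set.Ici N).indicator f) := by
  have htail : ∀ n, (Set.Ici N).indicator (S.indicator f) (n + N) = S.indicator f (n + N) :=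
    fun n => Set.indicator_of_mem (Nat.le_add_left N n) _
  rwa [Set.inter_comm, ← Set.indicator_indicator, ← summable_nat_add_iff N, funext htail,
    summable_nat_add_iff N]

theorem exists_finset_subset_one_le_sum_le_two {S : Set ℕ} {f : ℕ → ℝ} (hf0 : 0 ≤ f)
    (hf1 : ∀ n ∈ S, f n ≤ 1) (hS : ¬ Summable (S.indicator f)) :
    ∃ F : Finset ℕ, ↑F ⊆ S ∧ 1 ≤ ∑ n ∈ F, f n ∧ ∑ n ∈ F, f n ≤ 2 := by
  classical
  have hg0 : ∀ n, 0 ≤ S.indicator f n := Set.indicator_nonneg fun n _ => hf0 n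
  have hex : ∃ m, 1 ≤ ∑ n ∈ range m, S.indicator f n := by
    by_contra! h
    exact hS (summable_of_sum_range_le hg0 fun m => (h m).le)
  -- the first partial sum reaching `1` overshoots it by at most one term, which is `≤ 1`
  obtain ⟨m, hm⟩ : ∃ m, Nat.find hex = m + 1 :=
    Nat.exists_eq_add_one.2 <| Nat.pos_of_ne_zero fun h => by
      have h1 := Nat.find_spec hex
      rw [h, range_zero, sum_empty] at h1
      linarith
  have hbefore : ∑ n ∈ range m, S.indicator f n < 1 := not_le.1 (Nat.find_min hex (by omega))
  have hlast : S.indicator f m ≤ 1 := Set.indicator_apply_le' (hf1 m) fun _ => zero_le_one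
  have hsum : ∑ n ∈ range (m + 1), S.indicator f n = ∑ n ∈ range (m + 1) with n ∈ S, f n :=
    sum_indicator_eq_sum_filter _ (fun _ => f) (fun _ => S) id
  refine ⟨{n ∈ range (m + 1) | n ∈ S}, fun n hn => (mem_filter.1 hn).2, ?_, ?_⟩
  · rw [← hsum, ← hm]
    exact Nat.find_spec hex
  · rw [← hsum, sum_range_succ]
    linarith

theorem summable_indicator_iUnion_of_subset_Ici {g : ℕ → ℝ} (hg : 0 ≤ g) {F : ℕ → Finset ℕ}
    (hF : ∀ k, ∀ n ∈ F k, k ≤ n) (hsum : Summable fun k => ∑ n ∈ F k, g n) :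
    Summable ((⋃ k, (F k : Set ℕ)).indicator g) := by
  classical
  refine summable_of_sum_range_le (c := ∑' k, ∑ n ∈ F k, g n)
    (Set.indicator_nonneg fun n _ => hg n) fun m => ?_
  have hsub : {n ∈ range m | n ∈ ⋃ k, (F k : Set ℕ)} ⊆ (range m).sup F := by
    intro n hn
    obtain ⟨hnm, hn⟩ := mem_filter.1 hn
    obtain ⟨k, hk⟩ := Set.mem_iUnion.1 hn
    exact mem_sup.2 ⟨k, mem_range.2 ((hF k n hk).trans_lt (mem_range.1 hnm)), hk⟩
  have hunion : ∀ s t : Finset ℕ, ∑ n ∈ s ∪ t, g n ≤ ∑ n ∈ s, g n + ∑ n ∈ t, g n := fun s t => by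
    rw [← sum_union_inter]
    exact le_add_of_nonneg_right (sum_nonneg fun n _ => hg n)
  calc ∑ n ∈ range m, (⋃ k, (F k : Set ℕ)).indicator g n
      = ∑ n ∈ range m with n ∈ ⋃ k, (F k : Set ℕ), g n :=
        sum_indicator_eq_sum_filter _ (fun _ => g) (fun _ => _) id
    _ ≤ ∑ n ∈ (range m).sup F, g n := sum_le_sum_of_subset_of_nonneg hsub fun n _ _ => hg n
    _ ≤ ∑ k ∈ range m, ∑ n ∈ F k, g n :=
        (range m).apply_sup_le_sum (f := fun s => ∑ n ∈ s, g n) sum_empty (hunion _ _)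
    _ ≤ ∑' k, ∑ n ∈ F k, g n := hsum.sum_le_tsum _ fun k _ => sum_nonneg fun n _ => hg n

theorem not_summable_of_frequently_le_sum {g : ℕ → ℝ} {F : ℕ → Finset ℕ}
    (hF : ∀ k, ∀ n ∈ F k, k ≤ n) {c : ℝ} (hc : 0 < c)
    (hmass : ∃ᶠ k in atTop, c ≤ ∑ n ∈ F k, g n) : ¬ Summable g := by
  intro hg
  obtain ⟨s, hs⟩ := hg.vanishing (Metric.ball_mem_nhds 0 hc)
  obtain ⟨k, hk, hck⟩ := frequently_atTop.1 hmass (s.sup id + 1)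
  have hdisj : Disjoint (F k) s := disjoint_left.2 fun n hn hns => by
    have hns' : n ≤ s.sup id := le_sup (f := id) hns
    have hkn := hF k n hn
    omega
  have hsmall := hs _ hdisj
  rw [Metric.mem_ball, dist_zero_right, Real.norm_eq_abs] at hsmall
  linarith [le_abs_self (∑ n ∈ F k, g n)]

theorem exists_set_summable_mul_and_not_summable_near_zero {a d : ℕ → ℝ} (ha0 : 0 ≤ a)
    (hd0 : 0 ≤ d) (ha : Tendsto a atTop (𝓝 0))
    (hdiv : ∀ ε > 0, ¬ Summable ({n | d n < ε}.indicator a)) :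
    ∃ Ω : Set ℕ, Summable (Ω.indicator fun n => d n * a n) ∧
      ∀ ε > 0, ¬ Summable ((Ω ∩ {n | d n < ε}).indicator a) := by
  obtain ⟨M, hM⟩ := eventually_atTop.1 (ha.eventually (ge_mem_nhds one_pos))
  have hblock : ∀ k : ℕ, ∃ F : Finset ℕ, ↑F ⊆ {n | d n < (1 / 2) ^ k} ∩ Set.Ici (max k M) ∧
      1 ≤ ∑ n ∈ F, a n ∧ ∑ n ∈ F, a n ≤ 2 := fun k =>
    exists_finset_subset_one_le_sum_le_two ha0 (fun n hn => hM n (le_of_max_le_right hn.2))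
      (not_summable_indicator_inter_Ici (hdiv _ (by positivity)) _)
  choose F hFS hF1 hF2 using hblock
  have hFk : ∀ k, ∀ n ∈ F k, k ≤ n := fun k n hn => le_of_max_le_left (hFS k hn).2
  refine ⟨⋃ k, (F k : Set ℕ), ?_, fun ε hε => ?_⟩
  · refine summable_indicator_iUnion_of_subset_Ici (fun n => mul_nonneg (hd0 n) (ha0 n)) hFk
      ((summable_geometric_two.mul_left 2).of_nonneg_of_le
        (fun k => sum_nonneg fun n _ => mul_nonneg (hd0 n) (ha0 n)) fun k => ?_)
    calc ∑ n ∈ F k, d n * a n ≤ ∑ n ∈ F k, (1 / 2) ^ k * a n :=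
          sum_le_sum fun n hn => mul_le_mul_of_nonneg_right (hFS k hn).1.le (ha0 n)
      _ = (1 / 2) ^ k * ∑ n ∈ F k, a n := (mul_sum _ _ _).symm
      _ ≤ 2 * (1 / 2) ^ k :=
          (mul_le_mul_of_nonneg_left (hF2 k) (by positivity)).trans_eq (mul_comm _ _)
  · obtain ⟨K, hK⟩ := exists_pow_lt_of_lt_one hε (by norm_num : (1 / 2 : ℝ) < 1)
    refine not_summable_of_frequently_le_sum hFk one_pos
      (eventually_atTop.2 ⟨K, fun k hk => ?_⟩).frequently
    have hmem : ∀ n ∈ F k, n ∈ (⋃ k, (F k : Set ℕ)) ∩ {n | d n < ε} := fun n hn =>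
      ⟨Set.mem_iUnion.2 ⟨k, hn⟩,
        (hFS k hn).1.trans_le (pow_le_pow_of_le_one (by norm_num) (by norm_num) hk) |>.trans hK⟩
    rw [sum_congr rfl fun n hn => Set.indicator_of_mem (hmem n hn) a]
    exact hF1 k

theorem stmt5_general
    {X : Type*} [NormedAddCommGroup X] [InnerProductSpace ℝ X] [FiniteDimensional ℝ X]
    (x : ℕ → X) (hx0 : Tendsto x atTop (𝓝 0))
    (z : X) (hz : IsDivergenceDirection x z)
    (X₀ : Submodule ℝ X) (hzX₀ : z ∈ X₀) :
    ∃ Ω : Set ℕ,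
      Summable (fun n : Ω => ‖(X₀ᗮ.orthogonalProjectionOnto (x (n : ℕ)) : X)‖) ∧
      ∀ ε : ℝ, 0 < ε →
        ¬ Summable (fun n : ↥(Ω ∩ {n : ℕ | dist (‖x n‖⁻¹ • x n) z < ε}) =>
          ‖x (n : ℕ)‖) := by
  have hnear : ∀ ε > 0,
      ¬ Summable ({n | dist (‖x n‖⁻¹ • x n) z < ε}.indicator fun n => ‖x n‖) :=
    fun ε hε => summable_subtype_iff_indicator.not.1 (hz.2 ε hε).2
  obtain ⟨Ω, hΩ, hdiv⟩ := exists_set_summable_mul_and_not_summable_near_zero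
    (fun n => norm_nonneg (x n)) (fun n => dist_nonneg (x := ‖x n‖⁻¹ • x n) (y := z))
    (tendsto_zero_iff_norm_tendsto_zero.1 hx0) hnear
  have hproj : ∀ n, ‖(X₀ᗮ.orthogonalProjectionOnto (x n) : X)‖ ≤
      dist (‖x n‖⁻¹ • x n) z * ‖x n‖ := fun n =>
    norm_orthogonalProjectionOnto_le_dist_mul_norm _ (X₀.le_orthogonal_orthogonal hzX₀) _
  refine ⟨Ω, ?_, fun ε hε =>
    (summable_subtype_iff_indicator (f := fun n => ‖x n‖)).not.2 (hdiv ε hε)⟩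
  refine (summable_subtype_iff_indicator
    (f := fun n => ‖(X₀ᗮ.orthogonalProjectionOnto (x n) : X)‖)).2 ?_
  exact hΩ.of_nonneg_of_le (Set.indicator_nonneg fun n _ => norm_nonneg _)
    fun n => Set.indicator_le_indicator (hproj n)

theorem stmt5
    {X : Type*} [NormedAddCommGroup X] [InnerProductSpace ℝ X] [FiniteDimensional ℝ X]
    (x : ℕ → X) (hx : ∀ n, x n ≠ 0) (hx0 : Tendsto x atTop (𝓝 0))
    (z : X) (hz : IsDivergenceDirection x z)
    (X₀ : Submodule ℝ X) (hzX₀ : z ∈ X₀) :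
    ∃ Ω : Set ℕ,
      Summable (fun n : Ω => ‖(X₀ᗮ.orthogonalProjectionOnto (x (n : ℕ)) : X)‖) ∧
      ∀ ε : ℝ, 0 < ε →
        ¬ Summable (fun n : ↥(Ω ∩ {n : ℕ | dist (‖x n‖⁻¹ • x n) z < ε}) =>
          ‖x (n : ℕ)‖) :=
  stmt5_general x hx0 z hz X₀ hzX₀
end

section
/- Let X be a real inner product space, z a unit vector, and S_z = {x ∈ S : ‖x − z‖ < δ} with δ ≤ 1/4, and let Ŝ_z = {t·s : t > 0, s ∈ S_z} be the cone over S_z. Then for any x, y ∈ Ŝ_z one has ‖x + y‖ ≥ ‖x‖ + ½‖y‖. -/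
open scoped RealInnerProductSpace


/-- The open cone over the spherical cap `{s : ‖s‖ = 1, ‖s - z‖ < δ}`. -/
def SphericalCone {X : Type*} [NormedAddCommGroup X] [InnerProductSpace ℝ X]
    (z : X) (δ : ℝ) : Set X :=
  {v : X | ∃ t : ℝ, 0 < t ∧ ∃ s : X, ‖s‖ = 1 ∧ ‖s - z‖ < δ ∧ v = t • s}

theorem stmt6
    {X : Type*} [NormedAddCommGroup X] [InnerProductSpace ℝ X]
    (z : X) (hz : ‖z‖ = 1) (δ : ℝ) (hδ0 : 0 < δ) (hδ : δ ≤ 1/4)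
    (x y : X) (hx : x ∈ SphericalCone z δ) (hy : y ∈ SphericalCone z δ) :
    ‖x‖ + (1/2) * ‖y‖ ≤ ‖x + y‖ := by
  obtain ⟨a, ha, s, hs1, hsz, rfl⟩ := hx
  obtain ⟨b, hb, u, hu1, huz, rfl⟩ := hy
  have hsu : ‖s - u‖ < 2 * δ := by
    have : s - u = (s - z) - (u - z) := by abel
    rw [this]
    calc ‖(s - z) - (u - z)‖ ≤ ‖s - z‖ + ‖u - z‖ := norm_sub_le _ _
      _ < 2 * δ := by linarith
  have hsub : ‖s - u‖ ^ 2 = 2 - 2 * ⟪s, u⟫ := by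
    rw [@norm_sub_sq_real, hs1, hu1]; ring
  have hsu2 : ‖s - u‖ ^ 2 < (1/2) ^ 2 := by
    have h0 : (0:ℝ) ≤ ‖s - u‖ := norm_nonneg _
    have : ‖s - u‖ < 1/2 := by linarith
    nlinarith
  have hinner : (1/2 : ℝ) ≤ ⟪s, u⟫ := by nlinarith
  have hadd : ‖a • s + b • u‖ ^ 2 = a ^ 2 + 2 * (a * b * ⟪s, u⟫) + b ^ 2 := by
    rw [@norm_add_sq_real, real_inner_smul_left, real_inner_smul_right,
      norm_smul, norm_smul, hs1, hu1]
    simp [Real.norm_eq_abs, abs_of_pos ha, abs_of_pos hb]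
    ring
  have hna : ‖a • s‖ = a := by
    rw [norm_smul, hs1, Real.norm_eq_abs, abs_of_pos ha, mul_one]
  have hnb : ‖b • u‖ = b := by
    rw [norm_smul, hu1, Real.norm_eq_abs, abs_of_pos hb, mul_one]
  rw [hna, hnb]
  have hsq : (a + (1/2) * b) ^ 2 ≤ ‖a • s + b • u‖ ^ 2 := by
    rw [hadd]; nlinarith [mul_pos ha hb, sq_nonneg b]
  nlinarith [norm_nonneg (a • s + b • u)]
end

section
/- Let X be a real inner product space, z ∈ S a unit vector, δ ∈ (0,1/4], and let (yₙ)_{n∈I} be a family of vectors contained in the cone Ŝ_z = {t·s : t > 0, ‖s − z‖ < δ, ‖s‖ = 1}, indexed by an infinite set I, such that yₙ → 0 along I and ∑_{n∈I} ‖yₙ‖ = ∞. Then for any real numbers 0 < a < b with b − a greater than sup‖yₙ‖ over any cofinite tail, and any finite set F ⊆ I, there exists a finite set E ⊆ I∖F with a < ‖∑_{n∈E} yₙ‖ ≤ b. -/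
open Filter Topology

/-!
Every vector of the cone makes an angle with `z` whose cosine is at least `c = 1 - δ² / 2 > 0`,
so pairing with `z` shows that the norm of a sum of cone vectors is at least `c` times the sum of
their norms. Divergence of `∑ ‖yₙ‖` (even after discarding the finitely many indices in `F` or
with `‖yₙ‖ ≥ b - a`) then yields a finite set whose sum has norm above `a`; removing its elements
one at a time, each step changing the norm by less than `b - a`, the last set whose sum still has
norm above `a` has norm at most `b`.
-/

section Greedy

variable {ι E : Type*} [NormedAddCommGroup E]

theorem Finset.exists_subset_norm_sum_mem_Ioc {a b : ℝ} (u : ι → E) (T : Finset ι)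
    (ha : 0 ≤ a) (hT : a < ‖∑ i ∈ T, u i‖) (hu : ∀ i ∈ T, ‖u i‖ ≤ b - a) :
    ∃ S ⊆ T, ‖∑ i ∈ S, u i‖ ∈ Set.Ioc a b := by
  classical
  induction T using Finset.induction_on with
  | empty => simp at hT; linarith
  | insert i T hiT ih =>
    by_cases hlarge : a < ‖∑ j ∈ T, u j‖
    · obtain ⟨S, hST, hS⟩ := ih hlarge fun j hj => hu j (Finset.mem_insert_of_mem hj)
      exact ⟨S, hST.trans (Finset.subset_insert i T), hS⟩
    · refine ⟨insert i T, subset_rfl, hT, ?_⟩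
      have hi := hu i (Finset.mem_insert_self i T)
      calc ‖∑ j ∈ insert i T, u j‖ = ‖u i + ∑ j ∈ T, u j‖ := by rw [Finset.sum_insert hiT]
        _ ≤ ‖u i‖ + ‖∑ j ∈ T, u j‖ := norm_add_le _ _
        _ ≤ b := by linarith

end Greedy

theorem exists_finset_lt_sum_of_not_summable {ι : Type*} {f : ι → ℝ} (hf : 0 ≤ f)
    (h : ¬ Summable f) {K : Set ι} (hK : K.Finite) (M : ℝ) :
    ∃ T : Finset ι, (∀ i ∈ T, i ∉ K) ∧ M < ∑ i ∈ T, f i := by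
  have hKc : ¬ Summable (f ∘ (↑) : ↑Kᶜ → ℝ) := by rwa [hK.summable_compl_iff]
  obtain ⟨T, hT⟩ : ∃ T : Finset ↑Kᶜ, M < ∑ i ∈ T, f i := by
    by_contra! hle
    exact hKc (summable_of_sum_le (fun i => hf i) hle)
  refine ⟨T.map (Function.Embedding.subtype _), ?_, by rwa [Finset.sum_map]⟩
  simp only [Finset.mem_map, Function.Embedding.coe_subtype]
  rintro _ ⟨i, -, rfl⟩
  exact i.2

section Cone

open scoped InnerProductSpace

variable {X : Type*} [NormedAddCommGroup X] [InnerProductSpace ℝ X] {z : X} {δ : ℝ}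

theorem mul_norm_le_inner_of_mem_sphericalCone (hz : ‖z‖ = 1) {v : X}
    (hv : v ∈ SphericalCone z δ) : (1 - δ ^ 2 / 2) * ‖v‖ ≤ ⟪v, z⟫_ℝ := by
  obtain ⟨t, ht, s, hs, hsz, rfl⟩ := hv
  have hsz2 : ‖s - z‖ ^ 2 < δ ^ 2 := by gcongr
  have hcos : 1 - δ ^ 2 / 2 ≤ ⟪s, z⟫_ℝ := by
    have h := norm_sub_sq_real s z
    rw [hs, hz] at h
    linarith
  rw [norm_smul, hs, Real.norm_of_nonneg ht.le, mul_one, real_inner_smul_left]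
  nlinarith

theorem mul_sum_norm_le_norm_sum_of_mem_sphericalCone {ι : Type*} (hz : ‖z‖ = 1)
    {s : Finset ι} {v : ι → X} (hv : ∀ i ∈ s, v i ∈ SphericalCone z δ) :
    (1 - δ ^ 2 / 2) * ∑ i ∈ s, ‖v i‖ ≤ ‖∑ i ∈ s, v i‖ :=
  calc (1 - δ ^ 2 / 2) * ∑ i ∈ s, ‖v i‖
      ≤ ⟪∑ i ∈ s, v i, z⟫_ℝ := by
        rw [sum_inner, Finset.mul_sum]
        exact Finset.sum_le_sum fun i hi => mul_norm_le_inner_of_mem_sphericalCone hz (hv i hi)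
    _ ≤ ‖∑ i ∈ s, v i‖ * ‖z‖ := real_inner_le_norm _ _
    _ = ‖∑ i ∈ s, v i‖ := by rw [hz, mul_one]

end Cone

theorem stmt7_general
    {X : Type*} [NormedAddCommGroup X] [InnerProductSpace ℝ X]
    (z : X) (hz : ‖z‖ = 1) (δ : ℝ) (hδ0 : 0 < δ) (hδ : δ ≤ 1/4)
    (I : Set ℕ)
    (y : ℕ → X) (hy : ∀ n ∈ I, y n ∈ SphericalCone z δ)
    (hdiv : ¬ Summable (fun n : I => ‖y (n : ℕ)‖))
    (a b : ℝ) (ha : 0 < a)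
    (htail : {n ∈ I | b - a ≤ ‖y n‖}.Finite)
    (F : Finset ℕ) :
    ∃ E : Finset ℕ, (E : Set ℕ) ⊆ I \ (F : Set ℕ) ∧
      a < ‖∑ n ∈ E, y n‖ ∧ ‖∑ n ∈ E, y n‖ ≤ b := by
  have hc : 0 < 1 - δ ^ 2 / 2 := by nlinarith
  set K : Set I := Subtype.val ⁻¹' ((F : Set ℕ) ∪ {n ∈ I | b - a ≤ ‖y n‖})
  have hK : K.Finite := (F.finite_toSet.union htail).preimage Subtype.val_injective.injOn
  obtain ⟨T, hTK, hT⟩ :=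
    exists_finset_lt_sum_of_not_summable (fun _ => norm_nonneg _) hdiv hK (a / (1 - δ ^ 2 / 2))
  have hTa : a < ‖∑ n ∈ T, y n‖ :=
    ((div_lt_iff₀' hc).1 hT).trans_le
      (mul_sum_norm_le_norm_sum_of_mem_sphericalCone hz fun n _ => hy n n.2)
  obtain ⟨S, hST, hS⟩ := T.exists_subset_norm_sum_mem_Ioc (fun n : I => y n) ha.le hTa
    fun n hn => (not_le.1 fun h => hTK n hn (Or.inr ⟨n.2, h⟩)).le
  refine ⟨S.map (Function.Embedding.subtype _), ?_, by
    simpa only [Finset.sum_map, Function.Embedding.coe_subtype, Set.mem_Ioc] using hS⟩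
  simp only [Finset.coe_map, Function.Embedding.coe_subtype, Set.image_subset_iff]
  exact fun n hn => ⟨n.2, fun hF => hTK n (hST hn) (Or.inl hF)⟩

theorem stmt7
    {X : Type*} [NormedAddCommGroup X] [InnerProductSpace ℝ X]
    (z : X) (hz : ‖z‖ = 1) (δ : ℝ) (hδ0 : 0 < δ) (hδ : δ ≤ 1/4)
    (I : Set ℕ) (hI : I.Infinite)
    (y : ℕ → X) (hy : ∀ n ∈ I, y n ∈ SphericalCone z δ)
    (hy0 : Tendsto (fun n : I => y (n : ℕ)) cofinite (𝓝 0))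
    (hdiv : ¬ Summable (fun n : I => ‖y (n : ℕ)‖))
    (a b : ℝ) (ha : 0 < a) (hab : a < b)
    (htail : {n ∈ I | b - a ≤ ‖y n‖}.Finite)
    (F : Finset ℕ) :
    ∃ E : Finset ℕ, (E : Set ℕ) ⊆ I \ (F : Set ℕ) ∧
      a < ‖∑ n ∈ E, y n‖ ∧ ‖∑ n ∈ E, y n‖ ≤ b :=
  stmt7_general z hz δ hδ0 hδ I y hy hdiv a b ha htail F
end

section
/- Let X₀ be a finite-dimensional real inner product space and D₀ ⊆ X₀ an affinely independent finite subset of the unit sphere with 0 in the interior of conv(D₀). Suppose (xₙ)_{n∈Ω} is a family of nonzero vectors in a larger inner product space X ⊇ X₀ tending to zero such that for each z ∈ D₀ and each neighborhood U of z in the unit sphere of X, ∑_{n∈Ω, xₙ/‖xₙ‖∈U} ‖xₙ‖ diverges. Then there is a constant C > 0 such that for every x ∈ X₀, ε > 0, and finite F ⊆ Ω, there exists a finite set E ⊆ Ω∖F with ‖x − ∑_{n∈E} xₙ‖ < ε and ‖∑_{n∈E'} xₙ‖ ≤ C·max(‖x‖, ε) for every subset E' ⊆ E. -/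
open Filter Topology

lemma aux_trim (f : ℕ → ℝ) (S : Set ℕ) (δ t : ℝ) (hδ : 0 < δ) (ht : 0 ≤ t)
    (hfδ : ∀ n ∈ S, f n < δ) :
    ∀ m (E : Finset ℕ), E.card = m → (E : Set ℕ) ⊆ S → t ≤ ∑ n ∈ E, f n →
      ∃ E' : Finset ℕ, (E' : Set ℕ) ⊆ S ∧ t ≤ ∑ n ∈ E', f n ∧ ∑ n ∈ E', f n < t + δ := by
  intro m
  induction m with
  | zero =>
    intro E hc hES hsum
    refine ⟨E, hES, hsum, ?_⟩
    rw [Finset.card_eq_zero.mp hc] at hsum ⊢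
    simp only [Finset.sum_empty] at hsum ⊢
    linarith
  | succ m ih =>
    intro E hc hES hsum
    by_cases h : ∑ n ∈ E, f n < t + δ
    · exact ⟨E, hES, hsum, h⟩
    · push_neg at h
      have hne : E.Nonempty := Finset.card_pos.mp (by omega)
      obtain ⟨e, he⟩ := hne
      refine ih (E.erase e) (by rw [Finset.card_erase_of_mem he, hc]; omega)
        (fun n hn => hES (Finset.mem_of_mem_erase (by exact_mod_cast hn))) ?_
      rw [Finset.sum_erase_eq_sub he]
      have := hfδ e (hES he)
      linarith

lemma aux_unbounded (f : ℕ → ℝ) (hf : ∀ n, 0 ≤ f n) (S : Set ℕ)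
    (hns : ¬ Summable (fun n : S => f n)) (c : ℝ) :
    ∃ E : Finset ℕ, (E : Set ℕ) ⊆ S ∧ c < ∑ n ∈ E, f n := by
  classical
  by_contra h
  push_neg at h
  apply hns
  refine summable_subtype_iff_indicator.mpr ?_
  apply summable_of_sum_le (c := c)
  · intro n
    exact Set.indicator_apply_nonneg (fun _ => hf n)
  · intro u
    have h1 : ∑ n ∈ u, S.indicator f n = ∑ n ∈ u.filter (· ∈ S), f n := by
      rw [Finset.sum_filter]
      refine Finset.sum_congr rfl fun n _ => ?_
      by_cases hn : n ∈ S <;> simp [Set.indicator_apply, hn]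
    rw [h1]
    exact le_of_not_gt fun hc => absurd (h (u.filter (· ∈ S)) (by
      intro n hn; exact (Finset.mem_filter.mp (by exact_mod_cast hn)).2)) (not_le.mpr hc)

lemma aux_not_summable_diff (f : ℕ → ℝ) (S G : Set ℕ) (hG : G.Finite)
    (hns : ¬ Summable (fun n : S => f n)) : ¬ Summable (fun n : (S \ G : Set ℕ) => f n) := by
  intro h
  replace h := summable_subtype_iff_indicator.mp h
  apply hns
  refine summable_subtype_iff_indicator.mpr ?_
  have heq : ∀ n, S.indicator f n = (S \ G).indicator f n + (S ∩ G).indicator f n := by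
    intro n
    by_cases hS : n ∈ S <;> by_cases hG' : n ∈ G <;>
      simp [Set.indicator_apply, hS, hG']
  have hfin : Summable ((S ∩ G).indicator f) := by
    refine summable_of_ne_finset_zero (s := hG.toFinset) fun n hn => ?_
    simp only [Set.Finite.mem_toFinset] at hn
    exact Set.indicator_of_notMem (fun hc => hn hc.2) f
  exact (h.add hfin).congr fun n => (heq n).symm

theorem stmt8
    {X : Type*} [NormedAddCommGroup X] [InnerProductSpace ℝ X] [FiniteDimensional ℝ X]
    (X₀ : Submodule ℝ X) (D₀ : Finset X)
    (hD₀X₀ : (D₀ : Set X) ⊆ (X₀ : Set X))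
    (hD₀S : ∀ z ∈ D₀, ‖z‖ = 1)
    (haff : AffineIndependent ℝ (fun z : (D₀ : Set X) => (z : X)))
    (h0 : (⟨0, X₀.zero_mem⟩ : X₀) ∈
      interior ((fun v : X₀ => (v : X)) ⁻¹' (convexHull ℝ (D₀ : Set X))))
    (Ω : Set ℕ) (x : ℕ → X) (hx : ∀ n ∈ Ω, x n ≠ 0)
    (hx0 : Tendsto (fun n : Ω => x (n : ℕ)) cofinite (𝓝 0))
    (hdiv : ∀ z ∈ D₀, ∀ ε : ℝ, 0 < ε →
      ¬ Summable (fun n : {n ∈ Ω | dist (‖x n‖⁻¹ • x n) z < ε} => ‖x (n : ℕ)‖)) :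
    ∃ C : ℝ, 0 < C ∧ ∀ x' ∈ X₀, ∀ ε : ℝ, 0 < ε → ∀ F : Finset ℕ, (F : Set ℕ) ⊆ Ω →
      ∃ E : Finset ℕ, (E : Set ℕ) ⊆ Ω \ (F : Set ℕ) ∧
        ‖x' - ∑ n ∈ E, x n‖ < ε ∧
        ∀ E' ⊆ E, ‖∑ n ∈ E', x n‖ ≤ C * max ‖x'‖ ε := by
  classical
  -- Step A: for each δ > 0 only finitely many n ∈ Ω have ‖x n‖ ≥ δ
  have hfin : ∀ δ : ℝ, 0 < δ → {n | n ∈ Ω ∧ δ ≤ ‖x n‖}.Finite := by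
    intro δ hδ
    have h1 : ((fun n : Ω => x (n : ℕ)) ⁻¹' Metric.ball 0 δ)ᶜ.Finite := by
      have := hx0 (Metric.ball_mem_nhds (0 : X) hδ)
      rwa [Filter.mem_map, Filter.mem_cofinite] at this
    refine (h1.image Subtype.val).subset ?_
    rintro n ⟨hn, hδn⟩
    refine ⟨⟨n, hn⟩, ?_, rfl⟩
    simp only [Set.mem_compl_iff, Set.mem_preimage, Metric.mem_ball, dist_zero_right, not_lt]
    exact hδn
  -- Step B: harvest near a single direction z
  have harvest : ∀ z ∈ D₀, ∀ δ : ℝ, 0 < δ → ∀ G : Finset ℕ, ∀ t : ℝ, 0 ≤ t →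
      ∃ E : Finset ℕ, (E : Set ℕ) ⊆ Ω \ (G : Set ℕ) ∧
        (∀ n ∈ E, n ∈ Ω ∧ dist (‖x n‖⁻¹ • x n) z < δ) ∧
        t ≤ ∑ n ∈ E, ‖x n‖ ∧ ∑ n ∈ E, ‖x n‖ < t + δ := by
    intro z hz δ hδ G t ht
    set B : Set ℕ := (G : Set ℕ) ∪ {n | n ∈ Ω ∧ δ ≤ ‖x n‖} with hB
    set S : Set ℕ := {n ∈ Ω | dist (‖x n‖⁻¹ • x n) z < δ} \ B with hS
    have hBfin : B.Finite := (G.finite_toSet).union (hfin δ hδ)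
    have hns := aux_not_summable_diff (fun n => ‖x n‖) _ B hBfin (hdiv z hz δ hδ)
    obtain ⟨E₀, hE₀S, hE₀⟩ := aux_unbounded _ (fun n => norm_nonneg _) S hns t
    have hfδ : ∀ n ∈ S, ‖x n‖ < δ := by
      rintro n ⟨⟨hnΩ, _⟩, hnB⟩
      by_contra hc
      exact hnB (Or.inr ⟨hnΩ, le_of_not_gt hc⟩)
    obtain ⟨E, hES, h1, h2⟩ := aux_trim (fun n => ‖x n‖) S δ t hδ ht hfδ E₀.card E₀ rfl hE₀S hE₀.le
    refine ⟨E, ?_, ?_, h1, h2⟩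
    · intro n hn
      obtain ⟨⟨hnΩ, _⟩, hnB⟩ := hES hn
      exact ⟨hnΩ, fun hF => hnB (Or.inl hF)⟩
    · intro n hn
      obtain ⟨⟨hnΩ, hd⟩, _⟩ := hES (Finset.mem_coe.mpr hn)
      exact ⟨hnΩ, hd⟩
  -- Step C: harvest for a finite family of directions
  have multi : ∀ D : Finset X, D ⊆ D₀ → ∀ δ : ℝ, 0 < δ → δ ≤ 1 → ∀ lam : X → ℝ,
      (∀ z ∈ D, 0 ≤ lam z) → ∀ G : Finset ℕ,
      ∃ E : Finset ℕ, (E : Set ℕ) ⊆ Ω \ (G : Set ℕ) ∧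
        ‖(∑ n ∈ E, x n) - ∑ z ∈ D, lam z • z‖ ≤ ∑ z ∈ D, (2 * δ + δ * lam z) ∧
        ∑ n ∈ E, ‖x n‖ ≤ ∑ z ∈ D, (lam z + δ) := by
    intro D
    induction D using Finset.induction_on with
    | empty => intro _ δ hδ _ lam _ G; exact ⟨∅, by simp, by simp, by simp⟩
    | @insert z D hzD ih =>
      intro hsub δ hδ hδ1 lam hlam G
      have hzD₀ : z ∈ D₀ := hsub (Finset.mem_insert_self z D)
      have hlamz : 0 ≤ lam z := hlam z (Finset.mem_insert_self z D)
      obtain ⟨Ez, hEzsub, hEzdir, hEz1, hEz2⟩ := harvest z hzD₀ δ hδ G (lam z) hlamz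
      obtain ⟨ED, hEDsub, hED1, hED2⟩ :=
        ih (fun w hw => hsub (Finset.mem_insert_of_mem hw)) δ hδ hδ1 lam
          (fun w hw => hlam w (Finset.mem_insert_of_mem hw)) (G ∪ Ez)
      have hdisj : Disjoint Ez ED := by
        rw [Finset.disjoint_right]
        intro n hn hnz
        have h := hEDsub (Finset.mem_coe.mpr hn)
        exact h.2 (by simp [hnz])
      refine ⟨Ez ∪ ED, ?_, ?_, ?_⟩
      · intro n hn
        rcases Finset.mem_union.mp (Finset.mem_coe.mp hn) with h | h
        · exact hEzsub (Finset.mem_coe.mpr h)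
        · have h' := hEDsub (Finset.mem_coe.mpr h)
          exact ⟨h'.1, fun hF => h'.2 (by simp [hF])⟩
      · rw [Finset.sum_union hdisj, Finset.sum_insert hzD, Finset.sum_insert hzD]
        have key : ‖(∑ n ∈ Ez, x n) - lam z • z‖ ≤ 2 * δ + δ * lam z := by
          set s := ∑ n ∈ Ez, ‖x n‖ with hs
          have hzn : ‖z‖ = 1 := hD₀S z hzD₀
          have h1 : ‖(∑ n ∈ Ez, x n) - s • z‖ ≤ δ * s := by
            rw [hs, Finset.sum_smul, ← Finset.sum_sub_distrib]
            refine (norm_sum_le _ _).trans ?_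
            rw [Finset.mul_sum]
            refine Finset.sum_le_sum fun n hn => ?_
            obtain ⟨hnΩ, hdist⟩ := hEzdir n hn
            have hxn : x n ≠ 0 := hx n hnΩ
            have hrw : x n - ‖x n‖ • z = ‖x n‖ • (‖x n‖⁻¹ • x n - z) := by
              rw [smul_sub, smul_inv_smul₀ (norm_ne_zero_iff.mpr hxn)]
            rw [hrw, norm_smul, Real.norm_eq_abs, abs_of_nonneg (norm_nonneg _), mul_comm]
            have : ‖‖x n‖⁻¹ • x n - z‖ ≤ δ := by
              rw [← dist_eq_norm]; exact hdist.le
            exact mul_le_mul_of_nonneg_right this (norm_nonneg _)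
          have h3 : ‖s • z - lam z • z‖ = |s - lam z| := by
            rw [← sub_smul, norm_smul, Real.norm_eq_abs, hzn, mul_one]
          have h2 : |s - lam z| ≤ δ := abs_le.mpr ⟨by linarith, by linarith⟩
          calc ‖(∑ n ∈ Ez, x n) - lam z • z‖
              ≤ ‖(∑ n ∈ Ez, x n) - s • z‖ + ‖s • z - lam z • z‖ :=
                norm_sub_le_norm_sub_add_norm_sub _ _ _
            _ ≤ δ * s + δ := by rw [h3]; exact add_le_add h1 h2
            _ ≤ 2 * δ + δ * lam z := by nlinarith
        calc ‖(∑ n ∈ Ez, x n) + (∑ n ∈ ED, x n) - (lam z • z + ∑ w ∈ D, lam w • w)‖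
            = ‖((∑ n ∈ Ez, x n) - lam z • z) + ((∑ n ∈ ED, x n) - ∑ w ∈ D, lam w • w)‖ := by
              rw [add_sub_add_comm]
          _ ≤ ‖(∑ n ∈ Ez, x n) - lam z • z‖ + ‖(∑ n ∈ ED, x n) - ∑ w ∈ D, lam w • w‖ :=
              norm_add_le _ _
          _ ≤ (2 * δ + δ * lam z) + ∑ w ∈ D, (2 * δ + δ * lam w) := add_le_add key hED1
      · rw [Finset.sum_union hdisj, Finset.sum_insert hzD]
        exact add_le_add hEz2.le hED2
  -- Step D: a ball around 0 in X₀ is inside the convex hull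
  obtain ⟨r, hr, hball⟩ : ∃ r > 0, ∀ y : X, y ∈ X₀ → ‖y‖ < r → y ∈ convexHull ℝ (D₀ : Set X) := by
    have h := mem_interior_iff_mem_nhds.mp h0
    rw [Metric.mem_nhds_iff] at h
    obtain ⟨r, hr, hball⟩ := h
    refine ⟨r, hr, fun y hy hyr => ?_⟩
    have : (⟨y, hy⟩ : X₀) ∈ Metric.ball (⟨0, X₀.zero_mem⟩ : X₀) r := by
      rw [Metric.mem_ball, Subtype.dist_eq]
      simpa [dist_eq_norm] using hyr
    exact hball this
  -- representation of elements of X₀ as nonnegative combinations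
  have rep : ∀ y ∈ X₀, ∃ lam : X → ℝ, (∀ z ∈ D₀, 0 ≤ lam z) ∧
      (∑ z ∈ D₀, lam z • z) = y ∧ ∑ z ∈ D₀, lam z ≤ 2 / r * ‖y‖ := by
    intro y hy
    rcases eq_or_ne y 0 with rfl | hy0
    · exact ⟨0, by simp, by simp, by simp⟩
    · have hny : (0:ℝ) < ‖y‖ := norm_pos_iff.mpr hy0
      have hmem : (r / (2 * ‖y‖)) • y ∈ convexHull ℝ (D₀ : Set X) := by
        apply hball _ (X₀.smul_mem _ hy)
        rw [norm_smul, Real.norm_eq_abs, abs_of_pos (by positivity)]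
        have heq : r / (2 * ‖y‖) * ‖y‖ = r / 2 := by
          field_simp
        rw [heq]
        linarith
      obtain ⟨w, hw0, hw1, hwsum⟩ := Finset.mem_convexHull'.mp hmem
      refine ⟨fun z => (2 * ‖y‖ / r) * w z, fun z hz => mul_nonneg (by positivity) (hw0 z hz), ?_, ?_⟩
      · have : ∑ z ∈ D₀, (2 * ‖y‖ / r * w z) • z = (2 * ‖y‖ / r) • ∑ z ∈ D₀, w z • z := by
          rw [Finset.smul_sum]
          exact Finset.sum_congr rfl fun z _ => by rw [smul_smul]
        rw [this, hwsum, smul_smul]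
        have : 2 * ‖y‖ / r * (r / (2 * ‖y‖)) = 1 := by
          field_simp
        rw [this, one_smul]
      · rw [← Finset.mul_sum, hw1, mul_one]
        have : 2 * ‖y‖ / r = 2 / r * ‖y‖ := by ring
        rw [this]
  -- Step E: assembly
  refine ⟨2 / r + 1, by positivity, ?_⟩
  intro x' hx' ε hε F hF
  obtain ⟨lam, hlam0, hlamsum, hlamle⟩ := rep x' hx'
  set M : ℝ := ∑ z ∈ D₀, lam z with hM
  have hM0 : 0 ≤ M := Finset.sum_nonneg hlam0
  set k : ℕ := D₀.card with hk
  set δ : ℝ := min 1 (ε / (2 * k + M + 1)) with hδdef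
  have hden : (0:ℝ) < 2 * k + M + 1 := by positivity
  have hδ : 0 < δ := lt_min one_pos (by positivity)
  have hδ1 : δ ≤ 1 := min_le_left _ _
  have hδ2 : δ ≤ ε / (2 * k + M + 1) := min_le_right _ _
  obtain ⟨E, hEsub, hE1, hE2⟩ := multi D₀ (le_refl _) δ hδ hδ1 lam hlam0 F
  refine ⟨E, hEsub, ?_, ?_⟩
  · have hb : ‖x' - ∑ n ∈ E, x n‖ ≤ ∑ z ∈ D₀, (2 * δ + δ * lam z) := by
      rw [← hlamsum, norm_sub_rev]
      exact hE1
    have hsum : ∑ z ∈ D₀, (2 * δ + δ * lam z) = δ * (2 * k + M) := by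
      rw [Finset.sum_add_distrib, Finset.sum_const, ← Finset.mul_sum, ← hM]
      push_cast
      ring
    rw [hsum] at hb
    refine lt_of_le_of_lt hb ?_
    have h1 : δ * (2 * k + M) ≤ ε / (2 * k + M + 1) * (2 * k + M) :=
      mul_le_mul_of_nonneg_right hδ2 (by positivity)
    refine lt_of_le_of_lt h1 ?_
    rw [div_mul_eq_mul_div, div_lt_iff₀ hden]
    nlinarith
  · intro E' hE'
    have h1 : ‖∑ n ∈ E', x n‖ ≤ ∑ n ∈ E', ‖x n‖ := norm_sum_le _ _
    have h2 : ∑ n ∈ E', ‖x n‖ ≤ ∑ n ∈ E, ‖x n‖ :=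
      Finset.sum_le_sum_of_subset_of_nonneg hE' (fun n _ _ => norm_nonneg _)
    have h3 : ∑ z ∈ D₀, (lam z + δ) = M + k * δ := by
      rw [Finset.sum_add_distrib, Finset.sum_const, ← hM]
      push_cast
      ring
    have hkδ : (k:ℝ) * δ ≤ ε := by
      have : (k:ℝ) * δ ≤ k * (ε / (2 * k + M + 1)) :=
        mul_le_mul_of_nonneg_left hδ2 (by positivity)
      refine this.trans ?_
      rw [mul_div_assoc']
      rw [div_le_iff₀ hden]
      nlinarith [Nat.cast_nonneg (α := ℝ) k]
    have hMle : M ≤ 2 / r * ‖x'‖ := hlamle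
    have hmax1 : ‖x'‖ ≤ max ‖x'‖ ε := le_max_left _ _
    have hmax2 : ε ≤ max ‖x'‖ ε := le_max_right _ _
    calc ‖∑ n ∈ E', x n‖ ≤ ∑ n ∈ E, ‖x n‖ := h1.trans h2
      _ ≤ M + k * δ := by rw [← h3]; exact hE2
      _ ≤ 2 / r * ‖x'‖ + ε := add_le_add hMle hkδ
      _ ≤ 2 / r * max ‖x'‖ ε + 1 * max ‖x'‖ ε := by
          refine add_le_add (mul_le_mul_of_nonneg_left hmax1 (by positivity)) ?_
          rw [one_mul]; exact hmax2
      _ = (2 / r + 1) * max ‖x'‖ ε := by ring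
end

section
/- Let (xₙ) be a sequence of nonzero vectors in a finite-dimensional real inner product space X, let D ⊆ S be the set of divergence directions of ∑xₙ, let X₀ be the linear span of D, and X₁ = X₀^⊥. Then Γ = {y ∈ X : ∑ₙ |⟨y,xₙ⟩| < ∞} is contained in X₁. -/
open Filter Topology
open scoped RealInnerProductSpace

theorem stmt9
    {X : Type*} [NormedAddCommGroup X] [InnerProductSpace ℝ X] [FiniteDimensional ℝ X]
    (x : ℕ → X) (hx : ∀ n, x n ≠ 0)
    (y : X) (hy : Summable (fun n => |⟪y, x n⟫|)) :
    y ∈ (Submodule.span ℝ {z : X | IsDivergenceDirection x z})ᗮ := by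
  rw [Submodule.mem_orthogonal]
  intro u hu
  induction hu using Submodule.span_induction with
  | mem z hz =>
    -- main case: z is a divergence direction
    by_contra hc
    set c : ℝ := ⟪z, y⟫ with hcdef
    have hy0 : y ≠ 0 := by
      rintro rfl
      exact hc (inner_zero_right z)
    have hcpos : 0 < |c| := abs_pos.mpr hc
    have hynorm : 0 < ‖y‖ := norm_pos_iff.mpr hy0
    set ε : ℝ := |c| / (2 * ‖y‖) with hεdef
    have hε : 0 < ε := div_pos hcpos (by positivity)
    obtain ⟨-, hnsum⟩ := hz.2 ε hε
    apply hnsum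
    have key : ∀ n : {n : ℕ | dist (‖x n‖⁻¹ • x n) z < ε},
        ‖x (n : ℕ)‖ ≤ (2 / |c|) * |⟪y, x (n : ℕ)⟫| := by
      rintro ⟨n, hn⟩
      simp only [Set.mem_setOf_eq] at hn
      set u : X := ‖x n‖⁻¹ • x n with hudef
      have hxn : (0:ℝ) < ‖x n‖ := norm_pos_iff.mpr (hx n)
      have hinner : ⟪y, x n⟫ = ‖x n‖ * ⟪y, u⟫ := by
        rw [hudef, real_inner_smul_right]
        field_simp
      have hdiff : |⟪y, z⟫ - ⟪y, u⟫| < |c| / 2 := by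
        calc |⟪y, z⟫ - ⟪y, u⟫| = |⟪y, z - u⟫| := by rw [inner_sub_right]
          _ ≤ ‖y‖ * ‖z - u‖ := by
              simpa using abs_real_inner_le_norm y (z - u)
          _ < ‖y‖ * ε := by
              apply mul_lt_mul_of_pos_left _ hynorm
              rw [← dist_eq_norm, dist_comm]
              exact hn
          _ = |c| / 2 := by
              rw [hεdef]; field_simp
      have hzy : ⟪y, z⟫ = c := (real_inner_comm y z).symm
      have hlow : |c| / 2 ≤ |⟪y, u⟫| := by
        have h1 : |⟪y, z⟫| - |⟪y, u⟫| ≤ |⟪y, z⟫ - ⟪y, u⟫| :=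
          abs_sub_abs_le_abs_sub _ _
        rw [hzy] at h1 hdiff
        linarith
      have habs : |⟪y, x n⟫| = ‖x n‖ * |⟪y, u⟫| := by
        rw [hinner, abs_mul, abs_of_pos hxn]
      rw [habs, div_mul_eq_mul_div, le_div_iff₀ hcpos]
      nlinarith [hlow, hxn.le]
    exact Summable.of_nonneg_of_le (fun n => norm_nonneg _) key
      ((hy.subtype _).mul_left (2 / |c|))
  | zero => exact inner_zero_left y
  | add a b _ _ ha hb => rw [inner_add_left, ha, hb, add_zero]
  | smul r a _ ha => rw [real_inner_smul_left, ha, mul_zero]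
end

section
/- Let (xₙ) be a sequence in a finite-dimensional real normed space X and suppose the set Σ of potential sums of ∑xₙ is nonempty. Then Σ is closed under the operation (a, b, t) ↦ (1−t)a + t·b for a, b ∈ Σ and t ∈ ℝ, i.e., Σ contains the whole affine line through any two of its points. -/
/-!
If `∑ x (σ n)` converges to `a`, every functional `f` with `∑ |f (x n)| < ∞` takes the value
`∑ f (x n)` at the sum of every convergent rearrangement, so it annihilates `v = t • (b - a)`; it
remains to rearrange `y = x ∘ σ` so that it sums to `a + v`.

By Hahn–Banach, a vector annihilated by all such `f` lies in the closure of the zonotope spanned by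
any tail of `y`. A vertex of the fibre of `c ↦ ∑ cᵢ • yᵢ` over the cube `[0, 1]ⁿ` has at most
`dim X` fractional coordinates, so rounding it gives a tail subset sum within `(dim X + 1) ε` of
`v`. The rearrangement is built block by block: a block consists of the indices left out below a
new cut together with such a tail subset, so its sum is small, and the Steinitz lemma orders it so
that all of its partial sums stay small.
-/

open Filter Topology Finset

section Vertex

variable {ι Y : Type*} [AddCommGroup Y] [Module ℝ Y]

theorem isCompact_setOf_mem_Icc_and_map_eq [Fintype ι] (Λ : (ι → ℝ) →ₗ[ℝ] Y) (c : ι → ℝ) :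
    IsCompact {c' : ι → ℝ | (∀ i, c' i ∈ Set.Icc 0 1) ∧ Λ c' = Λ c} := by
  refine (isCompact_univ_pi fun _ => isCompact_Icc).of_isClosed_subset ?_
    fun c' hc' => Set.mem_univ_pi.mpr hc'.1
  have hker : IsClosed {c' : ι → ℝ | c' - c ∈ LinearMap.ker Λ} :=
    (LinearMap.ker Λ).closed_of_finiteDimensional.preimage (continuous_sub_right c)
  convert (isClosed_set_pi (i := Set.univ) (s := fun _ => Set.Icc (0:ℝ) 1)
    fun i _ => isClosed_Icc).inter hker using 1
  ext c'
  simp [sub_eq_zero, Pi.le_def, forall_and]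

theorem Fintype.exists_mem_Icc_sum_smul_eq_card_Ioo_le_finrank [Module.Finite ℝ Y] [Fintype ι]
    (v : ι → Y)
    (c : ι → ℝ) (hc : ∀ i, c i ∈ Set.Icc 0 1) :
    ∃ c' : ι → ℝ, (∀ i, c' i ∈ Set.Icc 0 1) ∧ ∑ i, c' i • v i = ∑ i, c i • v i ∧
      #{i | c' i ∈ Set.Ioo 0 1} ≤ Module.finrank ℝ Y := by
  classical
  set Λ := Fintype.linearCombination ℝ v
  set K : Set (ι → ℝ) := {c' | (∀ i, c' i ∈ Set.Icc 0 1) ∧ Λ c' = Λ c}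
  have hK : IsCompact K := isCompact_setOf_mem_Icc_and_map_eq Λ c
  obtain ⟨c', hc'K, hext⟩ := hK.extremePoints_nonempty ⟨c, hc, rfl⟩
  refine ⟨c', hc'K.1, by simpa [Λ, Fintype.linearCombination_apply] using hc'K.2, ?_⟩
  set F : Finset ι := {i | c' i ∈ Set.Ioo 0 1}
  -- a linear dependency among the `v i` with `i ∈ F` would let `c'` move both ways inside `K`
  suffices hF : LinearIndepOn ℝ v (F : Set ι) by
    simpa using hF.fintype_card_le_finrank
  rw [linearIndepOn_finset_iff]
  intro g hg i₀ hi₀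
  by_contra hgi₀
  set g' : ι → ℝ := fun i => if i ∈ F then g i else 0
  have hΛg' : Λ g' = 0 := by
    simpa [Λ, Fintype.linearCombination_apply, g', ite_smul, Finset.sum_ite_mem] using hg
  have hmove : ∀ᶠ ε in 𝓝 (0 : ℝ), c' + ε • g' ∈ K := by
    refine Filter.Eventually.and ?_ (Filter.Eventually.of_forall fun ε => ?_)
    · refine Filter.eventually_all.mpr fun i => ?_
      by_cases hi : i ∈ F
      · have hlim : Tendsto (fun ε : ℝ => c' i + ε * g' i) (𝓝 0) (𝓝 (c' i)) :=
          (by fun_prop : Continuous fun ε : ℝ => c' i + ε * g' i).tendsto' 0 _ (by simp)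
        have hIoo : Set.Ioo (0:ℝ) 1 ∈ 𝓝 (c' i) := isOpen_Ioo.mem_nhds (by simpa [F] using hi)
        filter_upwards [hlim hIoo] with ε hε using Set.Ioo_subset_Icc_self hε
      · simpa [g', hi] using hc'K.1 i
    · simp [map_add, map_smul, hΛg', hc'K.2]
  have hmove' : ∀ᶠ ε in 𝓝 (0 : ℝ), c' + (-ε) • g' ∈ K :=
    (continuous_neg.tendsto' (0:ℝ) 0 neg_zero).eventually hmove
  obtain ⟨ε, ⟨hε₁, hε₂⟩, hε₀⟩ :=
    ((hmove.and hmove').filter_mono nhdsWithin_le_nhds |>.and self_mem_nhdsWithin).exists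
      (f := 𝓝[≠] (0:ℝ))
  have hseg : c' ∈ openSegment ℝ (c' + ε • g') (c' + (-ε) • g') :=
    ⟨1/2, 1/2, by norm_num, by norm_num, by norm_num, by module⟩
  have := congrFun (hext hε₁ hε₂ hseg) i₀
  simp_all [g']

theorem Finset.exists_mem_Icc_sum_smul_eq_card_Ioo_le_finrank [Module.Finite ℝ Y] (s : Finset ι)
    (v : ι → Y)
    (c : ι → ℝ) (hc : ∀ i ∈ s, c i ∈ Set.Icc 0 1) :
    ∃ c' : ι → ℝ, (∀ i ∈ s, c' i ∈ Set.Icc 0 1) ∧ ∑ i ∈ s, c' i • v i = ∑ i ∈ s, c i • v i ∧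
      #{i ∈ s | c' i ∈ Set.Ioo 0 1} ≤ Module.finrank ℝ Y := by
  classical
  obtain ⟨c', hbox, hsum, hcard⟩ :=
    Fintype.exists_mem_Icc_sum_smul_eq_card_Ioo_le_finrank (fun i : s => v i) (fun i => c i)
      fun i => hc i i.2
  refine ⟨fun i => if h : i ∈ s then c' ⟨i, h⟩ else 0, fun i hi => by simpa [hi] using hbox ⟨i, hi⟩,
    ?_, ?_⟩
  · rw [← sum_coe_sort s, ← sum_coe_sort s]
    simpa using hsum
  · refine le_trans (le_of_eq ?_) hcard
    rw [← card_map (Function.Embedding.subtype _)]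
    congr 1
    ext i
    by_cases hi : i ∈ s <;> simp [hi]

end Vertex

section Steinitz

variable {ι : Type*}

theorem Finset.exists_eq_zero_of_sum_eq_card_sub {s : Finset ι} {β : ι → ℝ} {n : ℕ}
    (hβ : ∀ i ∈ s, β i ∈ Set.Icc 0 1) (hfrac : #{i ∈ s | β i ∈ Set.Ioo 0 1} ≤ n + 1)
    (hsum : ∑ i ∈ s, β i = #s - (n + 1)) : ∃ i ∈ s, β i = 0 := by
  classical
  by_contra! hne
  set F := {i ∈ s | β i ∈ Set.Ioo 0 1}
  have hone : ∀ i ∈ s, β i ∉ Set.Ioo 0 1 → β i = 1 := fun i hi hiF => by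
    obtain ⟨h0, h1⟩ := hβ i hi
    by_contra h
    exact hiF ⟨lt_of_le_of_ne h0 (hne i hi).symm, lt_of_le_of_ne h1 h⟩
  have hsplit : ∑ i ∈ s, β i = ∑ i ∈ F, β i + (#s - #F) := by
    rw [← sum_filter_add_sum_filter_not s (β · ∈ Set.Ioo 0 1),
      sum_congr rfl fun i hi => hone i (mem_filter.mp hi).1 (mem_filter.mp hi).2, sum_const,
      nsmul_one, ← card_filter_add_card_filter_not (s := s) (β · ∈ Set.Ioo 0 1)]
    push_cast
    ring
  have hF : ∑ i ∈ F, β i = #F - (n + 1) := by linarith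
  rcases F.eq_empty_or_nonempty with hFe | hFne
  · simp [hFe] at hF
    linarith
  · have := sum_pos (fun i hi => (mem_filter.mp hi).2.1) hFne
    have : (#F : ℝ) ≤ n + 1 := by exact_mod_cast hfrac
    linarith

/-- The induction invariant of the Grinberg–Sevastyanov proof of the Steinitz lemma. -/
def IsSteinitzWeight {Y : Type*} [AddCommGroup Y] [Module ℝ Y] (s : Finset ι) (w : ι → Y)
    (c : ι → ℝ) : Prop :=
  (∀ i ∈ s, c i ∈ Set.Icc 0 1) ∧ ∑ i ∈ s, c i = #s - Module.finrank ℝ Y ∧ ∑ i ∈ s, c i • w i = 0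

theorem IsSteinitzWeight.exists_erase {Y : Type*} [AddCommGroup Y] [Module ℝ Y] [Module.Finite ℝ Y]
    [DecidableEq ι] {s : Finset ι} {w : ι → Y} {c : ι → ℝ}
    (hc : IsSteinitzWeight s w c) (hs : Module.finrank ℝ Y < #s) :
    ∃ i ∈ s, ∃ β, IsSteinitzWeight (s.erase i) w β := by
  obtain ⟨hbox, hsum, hcw⟩ := hc
  set d := Module.finrank ℝ Y
  have hdk : (d : ℝ) + 1 ≤ #s := by exact_mod_cast hs
  set θ : ℝ := (#s - 1 - d) / (#s - d)
  have hθ : θ * (#s - d) = #s - 1 - d := div_mul_cancel₀ _ (by linarith)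
  have hθ0 : 0 ≤ θ := div_nonneg (by linarith) (by linarith)
  have hθ1 : θ ≤ 1 := (div_le_one (by linarith)).mpr (by linarith)
  -- a vertex for the vectors `(1, w i) : ℝ × Y` keeps both `∑ β` and `∑ β • w`
  obtain ⟨β, hβ, hβsum, hβcard⟩ := s.exists_mem_Icc_sum_smul_eq_card_Ioo_le_finrank
    (fun i => ((1 : ℝ), w i)) (fun i => θ * c i) fun i hi =>
      ⟨mul_nonneg hθ0 (hbox i hi).1, mul_le_one₀ hθ1 (hbox i hi).1 (hbox i hi).2⟩
  rw [Module.finrank_prod, Module.finrank_self, add_comm] at hβcard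
  have hβ₁ : ∑ i ∈ s, β i = #s - (d + 1) := by
    have := congrArg Prod.fst hβsum
    simp only [Prod.fst_sum, Prod.smul_fst, smul_eq_mul, mul_one] at this
    rw [this, ← mul_sum, hsum, hθ]
    ring
  have hβ₂ : ∑ i ∈ s, β i • w i = 0 := by
    have := congrArg Prod.snd hβsum
    simp only [Prod.snd_sum, Prod.smul_snd, mul_smul] at this
    rw [this, ← smul_sum, hcw, smul_zero]
  obtain ⟨i, hi, hβi⟩ := exists_eq_zero_of_sum_eq_card_sub hβ hβcard (by exact_mod_cast hβ₁)
  refine ⟨i, hi, β, fun j hj => hβ j (mem_of_mem_erase hj), ?_, ?_⟩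
  · rw [sum_erase _ hβi, hβ₁, card_erase_of_mem hi, Nat.cast_sub (card_pos.mpr ⟨i, hi⟩)]
    ring
  · rw [sum_erase _ (by rw [hβi, zero_smul]), hβ₂]

theorem List.norm_sum_map_le {E : Type*} [SeminormedAddCommGroup E] {l : List ι} {w : ι → E}
    {r : ℝ} (hw : ∀ i ∈ l, ‖w i‖ ≤ r) : ‖(l.map w).sum‖ ≤ l.length * r := by
  induction l with
  | nil => simp
  | cons i l ih =>
    simp only [List.map_cons, List.sum_cons, List.length_cons, Nat.cast_succ]
    linarith [norm_add_le (w i) (l.map w).sum, hw i List.mem_cons_self,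
      ih fun j hj => hw j (List.mem_cons_of_mem i hj)]

theorem IsSteinitzWeight.norm_sum_le {X : Type*} [NormedAddCommGroup X] [NormedSpace ℝ X]
    {s : Finset ι} {w : ι → X} {c : ι → ℝ}
    (hc : IsSteinitzWeight s w c) {r : ℝ} (hw : ∀ i ∈ s, ‖w i‖ ≤ r) :
    ‖∑ i ∈ s, w i‖ ≤ Module.finrank ℝ X * r := by
  obtain ⟨hbox, hsum, hcw⟩ := hc
  have h : ∑ i ∈ s, w i = ∑ i ∈ s, (1 - c i) • w i := by
    simp [sub_smul, sum_sub_distrib, hcw]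
  calc ‖∑ i ∈ s, w i‖ ≤ ∑ i ∈ s, (1 - c i) * r := by
        rw [h]
        refine norm_sum_le_of_le _ fun i hi => ?_
        rw [norm_smul, Real.norm_of_nonneg (sub_nonneg.mpr (hbox i hi).2)]
        exact mul_le_mul_of_nonneg_left (hw i hi) (sub_nonneg.mpr (hbox i hi).2)
    _ = Module.finrank ℝ X * r := by
        rw [← sum_mul, sum_sub_distrib, hsum, sum_const, nsmul_one]
        ring

variable {X : Type*} [NormedAddCommGroup X] [NormedSpace ℝ X] [FiniteDimensional ℝ X]

theorem Finset.exists_subset_norm_sum_sub_sum_smul_le (s : Finset ι) (w : ι → X) {r : ℝ}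
    (hr : 0 ≤ r) (hw : ∀ i ∈ s, ‖w i‖ ≤ r) (c : ι → ℝ) (hc : ∀ i ∈ s, c i ∈ Set.Icc 0 1) :
    ∃ T ⊆ s, ‖∑ i ∈ T, w i - ∑ i ∈ s, c i • w i‖ ≤ Module.finrank ℝ X * r := by
  classical
  obtain ⟨c', hbox, hsum, hcard⟩ := s.exists_mem_Icc_sum_smul_eq_card_Ioo_le_finrank w c hc
  refine ⟨{i ∈ s | c' i = 1}, filter_subset _ _, ?_⟩
  have hterm : ∀ i ∈ s, ‖((if c' i = 1 then 1 else 0) - c' i) • w i‖ ≤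
      if c' i ∈ Set.Ioo 0 1 then r else 0 := by
    intro i hi
    obtain ⟨h0, h1⟩ := hbox i hi
    rcases h0.eq_or_lt with h0 | h0
    · simp [← h0]
    rcases h1.eq_or_lt with h1 | h1
    · simp [h1]
    rw [if_neg h1.ne, if_pos ⟨h0, h1⟩, norm_smul, Real.norm_eq_abs, zero_sub, abs_neg,
      abs_of_pos h0]
    nlinarith [hw i hi, norm_nonneg (w i)]
  calc ‖∑ i ∈ s with c' i = 1, w i - ∑ i ∈ s, c i • w i‖
      = ‖∑ i ∈ s, ((if c' i = 1 then 1 else 0) - c' i) • w i‖ := by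
        simp_rw [← hsum, sub_smul, sum_sub_distrib, ite_smul, one_smul, zero_smul, sum_ite,
          sum_const_zero, add_zero]
    _ ≤ ∑ i ∈ s, if c' i ∈ Set.Ioo 0 1 then r else 0 := norm_sum_le_of_le _ hterm
    _ = #{i ∈ s | c' i ∈ Set.Ioo 0 1} * r := by rw [← sum_filter]; simp
    _ ≤ Module.finrank ℝ X * r := by gcongr

theorem Finset.exists_nodup_prefix_norm_sum_le_of_isSteinitzWeight [DecidableEq ι] (s : Finset ι)
    (w : ι → X) {r : ℝ} (hr : 0 ≤ r) (hw : ∀ i ∈ s, ‖w i‖ ≤ r)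
    (hc : Module.finrank ℝ X < #s → ∃ c, IsSteinitzWeight s w c) :
    ∃ l : List ι, l.Nodup ∧ l.toFinset = s ∧
      ∀ p, p <+: l → ‖(p.map w).sum‖ ≤ Module.finrank ℝ X * r := by
  induction s using Finset.strongInduction with
  | H s ih =>
  by_cases hs : #s ≤ Module.finrank ℝ X
  · refine ⟨s.toList, s.nodup_toList, s.toList_toFinset, fun p hp => ?_⟩
    have hlen : p.length ≤ #s := by simpa using hp.length_le
    calc ‖(p.map w).sum‖ ≤ p.length * r :=
          List.norm_sum_map_le fun i hi => hw i (by simpa using hp.subset hi)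
      _ ≤ Module.finrank ℝ X * r := by gcongr; exact_mod_cast hlen.trans hs
  obtain ⟨c, hc⟩ := hc (not_le.mp hs)
  obtain ⟨i, hi, β, hβ⟩ := hc.exists_erase (not_le.mp hs)
  obtain ⟨l, hl, hls, hlp⟩ := ih _ (erase_ssubset hi) (fun j hj => hw j (mem_of_mem_erase hj))
    fun _ => ⟨β, hβ⟩
  have hil : i ∉ l := by simp [← List.mem_toFinset, hls]
  have hnd : (l ++ [i]).Nodup := hl.append (List.nodup_singleton i) (by simp [hil])
  have hls' : (l ++ [i]).toFinset = s := by simp [hls, insert_erase hi]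
  refine ⟨l ++ [i], hnd, hls', fun p hp => ?_⟩
  rcases List.prefix_concat_iff.mp hp with rfl | hp
  · rw [← List.sum_toFinset _ hnd, hls']
    exact hc.norm_sum_le hw
  · exact hlp p hp

theorem Finset.exists_nodup_prefix_norm_sum_le [DecidableEq ι] (s : Finset ι) (w : ι → X)
    {r : ℝ} (hr : 0 ≤ r) (hw : ∀ i ∈ s, ‖w i‖ ≤ r) (hsum : ∑ i ∈ s, w i = 0) :
    ∃ l : List ι, l.Nodup ∧ l.toFinset = s ∧
      ∀ p, p <+: l → ‖(p.map w).sum‖ ≤ Module.finrank ℝ X * r := by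
  refine s.exists_nodup_prefix_norm_sum_le_of_isSteinitzWeight w hr hw fun hs => ?_
  have hs0 : (0 : ℝ) < #s := by exact_mod_cast (Nat.zero_le _).trans_lt hs
  have hds : (Module.finrank ℝ X : ℝ) ≤ #s := by exact_mod_cast hs.le
  refine ⟨fun _ => (#s - Module.finrank ℝ X) / #s, fun i _ => ⟨by positivity, ?_⟩, ?_, ?_⟩
  · exact (div_le_one hs0).mpr (by linarith [Nat.cast_nonneg (α := ℝ) (Module.finrank ℝ X)])
  · rw [sum_const, nsmul_eq_mul, mul_div_cancel₀ _ hs0.ne']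
  · rw [← smul_sum, hsum, smul_zero]

theorem List.sum_map_elim_eq {α M : Type*} [DecidableEq α] [AddCommMonoid M] (u : M) (f : α → M)
    (l : List (Option α)) :
    (l.map (Option.elim · u f)).sum = (l.reduceOption.map f).sum + l.count none • u := by
  induction l with
  | nil => simp
  | cons o l ih =>
    cases o <;> simp [ih, List.reduceOption_cons_of_none, List.reduceOption_cons_of_some,
      add_nsmul] <;> abel

theorem Finset.exists_nodup_prefix_norm_sum_le_of_norm_sum_le [DecidableEq ι] (s : Finset ι)
    (w : ι → X) {r r' : ℝ} (hr : 0 ≤ r) (hw : ∀ i ∈ s, ‖w i‖ ≤ r)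
    (hsum : ‖∑ i ∈ s, w i‖ ≤ r') :
    ∃ l : List ι, l.Nodup ∧ l.toFinset = s ∧
      ∀ p, p <+: l → ‖(p.map w).sum‖ ≤ Module.finrank ℝ X * (r + r') + r' := by
  -- adjoin `-∑ w` as an extra vector `none`, order the resulting zero-sum family, drop `none`
  set w' : Option ι → X := (Option.elim · (-∑ i ∈ s, w i) w)
  have hr' : 0 ≤ r' := (norm_nonneg _).trans hsum
  obtain ⟨l, hl, hls, hlp⟩ :=
    (insertNone s).exists_nodup_prefix_norm_sum_le w' (r := r + r') (by linarith)
    (fun o ho => by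
      cases o with
      | none => simpa [w'] using hsum.trans (le_add_of_nonneg_left hr)
      | some i => simpa [w'] using (hw i (by simpa using ho)).trans (le_add_of_nonneg_right hr'))
    (by simp [w', sum_insertNone])
  refine ⟨l.reduceOption, hl.filterMap fun a a' b ha ha' => by simp_all, ?_, fun p hp => ?_⟩
  · ext i
    rw [List.mem_toFinset, List.reduceOption_mem_iff, ← List.mem_toFinset, hls, some_mem_insertNone]
  obtain ⟨t, ht⟩ := hp
  obtain ⟨q, q', rfl, rfl, -⟩ := (List.reduceOption_eq_append_iff _ _ _).mp ht.symm
  have hcount : q.count none ≤ 1 :=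
    List.nodup_iff_count_le_one.mp (hl.sublist (List.sublist_append_left q q')) none
  have key := List.sum_map_elim_eq (-∑ i ∈ s, w i) w q
  rw [eq_sub_of_add_eq key.symm]
  calc ‖(q.map w').sum - q.count none • -∑ i ∈ s, w i‖
      ≤ ‖(q.map w').sum‖ + q.count none * ‖∑ i ∈ s, w i‖ := by
        refine (norm_sub_le _ _).trans (add_le_add_right ?_ _)
        simpa using norm_nsmul_le (n := q.count none) (a := -∑ i ∈ s, w i)
    _ ≤ Module.finrank ℝ X * (r + r') + 1 * r' := by
        gcongr
        · exact hlp q (List.prefix_append q q')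
        · exact_mod_cast hcount
    _ = _ := by ring

end Steinitz

section TailApproximation

theorem summable_abs_of_bddBelow_of_sum_Ico_max_le {u : ℕ → ℝ}
    (hlow : BddBelow (Set.range fun m => ∑ n ∈ range m, u n)) (N : ℕ) {C : ℝ}
    (hC : ∀ m, ∑ n ∈ Ico N m, max (u n) 0 ≤ C) : Summable fun n => |u n| := by
  obtain ⟨L, hL⟩ := hlow
  have hmax : ∀ m, ∑ n ∈ range m, max (u n) 0 ≤ ∑ n ∈ range N, max (u n) 0 + C := fun m =>
    calc ∑ n ∈ range m, max (u n) 0 ≤ ∑ n ∈ range (max m N), max (u n) 0 :=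
          sum_le_sum_of_subset_of_nonneg (range_subset_range.mpr (le_max_left _ _))
            fun _ _ _ => le_max_right _ _
      _ ≤ _ := by
          rw [← sum_range_add_sum_Ico _ (le_max_right m N)]
          linarith [hC (max m N)]
  refine summable_of_sum_range_le (c := 2 * (∑ n ∈ range N, max (u n) 0 + C) - L)
    (fun n => abs_nonneg _) fun m => ?_
  have habs : ∀ x : ℝ, |x| = 2 * max x 0 - x := fun x => by
    rcases le_total 0 x with h | h
    · rw [abs_of_nonneg h, max_eq_left h]; ring
    · rw [abs_of_nonpos h, max_eq_right h]; ring
  simp only [habs, sum_sub_distrib, ← mul_sum]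
  linarith [hmax m, hL ⟨m, rfl⟩]

variable {X : Type*} [NormedAddCommGroup X] [NormedSpace ℝ X]

def tailZonotope (y : ℕ → X) (N : ℕ) : Set X :=
  Finsupp.linearCombination ℝ y '' {c | ∀ i, c i ∈ Set.Icc 0 1 ∧ (i < N → c i = 0)}

theorem convex_tailZonotope (y : ℕ → X) (N : ℕ) : Convex ℝ (tailZonotope y N) := by
  refine Convex.linear_image (fun c₁ h₁ c₂ h₂ θ₁ θ₂ hθ₁ hθ₂ hθ i => ?_) _
  exact ⟨by simpa using convex_Icc (0:ℝ) 1 (h₁ i).1 (h₂ i).1 hθ₁ hθ₂ hθ,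
    fun hi => by simp [(h₁ i).2 hi, (h₂ i).2 hi]⟩

theorem exists_mem_tailZonotope_apply_eq_sum_Ico_max (y : ℕ → X) (f : StrongDual ℝ X)
    (N m : ℕ) : ∃ z ∈ tailZonotope y N, f z = ∑ i ∈ Ico N m, max (f (y i)) 0 := by
  classical
  refine ⟨_, ⟨∑ i ∈ Ico N m, Finsupp.single i (if 0 ≤ f (y i) then 1 else 0), fun i => ?_, rfl⟩, ?_⟩
  · simp only [Finsupp.finsetSum_apply, Finsupp.single_apply, sum_ite_eq', mem_Ico]
    exact ⟨by split_ifs <;> norm_num, fun hi => by simp [show ¬ N ≤ i by omega]⟩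
  · simp only [map_sum, Finsupp.linearCombination_single]
    refine sum_congr rfl fun i _ => ?_
    split_ifs with h
    · simp [h]
    · simp [(not_le.mp h).le]

/-- A functional that separates `v` from the tail zonotope is bounded above on the tail subset sums,
which together with the convergence of `∑ yₙ` makes `∑ |f yₙ|` finite. -/
theorem mem_closure_tailZonotope {y : ℕ → X} {a v : X}
    (hS : Tendsto (fun m => ∑ n ∈ range m, y n) atTop (𝓝 a))
    (hv : ∀ f : StrongDual ℝ X, Summable (fun n => |f (y n)|) → f v = 0) (N : ℕ) :
    v ∈ closure (tailZonotope y N) := by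
  by_contra hvZ
  obtain ⟨f, u, hfu, hfv⟩ := geometric_hahn_banach_closed_point
    (convex_tailZonotope y N).closure isClosed_closure hvZ
  have hu : 0 < u := by
    simpa using hfu 0 (subset_closure ⟨0, fun i => by simp, map_zero _⟩)
  have hpos : ∀ m, ∑ i ∈ Ico N m, max (f (y i)) 0 ≤ u := fun m => by
    obtain ⟨z, hz, hfz⟩ := exists_mem_tailZonotope_apply_eq_sum_Ico_max y f N m
    exact hfz ▸ (hfu z (subset_closure hz)).le
  have hsum : Summable fun n => |f (y n)| := by
    refine summable_abs_of_bddBelow_of_sum_Ico_max_le ?_ N hpos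
    simpa [map_sum, Function.comp_def] using ((f.continuous.tendsto a).comp hS).bddBelow_range
  linarith [hv f hsum]

theorem exists_tail_finset_norm_sum_sub_le [FiniteDimensional ℝ X] {y : ℕ → X} {v : X} {N : ℕ}
    (hv : v ∈ closure (tailZonotope y N)) {ε : ℝ} (hε : 0 < ε) (hy : ∀ i, N ≤ i → ‖y i‖ ≤ ε) :
    ∃ G : Finset ℕ, (∀ i ∈ G, N ≤ i) ∧
      ‖∑ i ∈ G, y i - v‖ ≤ (Module.finrank ℝ X + 1) * ε := by
  obtain ⟨z, ⟨c, hc, rfl⟩, hz⟩ := Metric.mem_closure_iff.mp hv ε hε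
  have htail : ∀ i ∈ c.support, N ≤ i := fun i hi =>
    not_lt.mp fun h => Finsupp.mem_support_iff.mp hi ((hc i).2 h)
  obtain ⟨T, hT, hTz⟩ := c.support.exists_subset_norm_sum_sub_sum_smul_le y hε.le
    (fun i hi => hy i (htail i hi)) c fun i _ => (hc i).1
  refine ⟨T, fun i hi => htail i (hT hi), ?_⟩
  rw [Finsupp.linearCombination_apply, Finsupp.sum, dist_eq_norm'] at hz
  calc ‖∑ i ∈ T, y i - v‖
      ≤ ‖∑ i ∈ T, y i - ∑ i ∈ c.support, c i • y i‖ + ‖∑ i ∈ c.support, c i • y i - v‖ :=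
        norm_sub_le_norm_sub_add_norm_sub _ _ _
    _ ≤ Module.finrank ℝ X * ε + ε := add_le_add hTz hz.le
    _ = (Module.finrank ℝ X + 1) * ε := by ring

end TailApproximation

section PrefixChain

variable {α E : Type*} {L : ℕ → List α}

theorem List.isPrefix_of_le_of_isPrefix_succ (hpre : ∀ k, L k <+: L (k + 1)) {j k : ℕ}
    (hjk : j ≤ k) : L j <+: L k := by
  induction k, hjk using Nat.le_induction with
  | base => exact List.prefix_refl _
  | succ k _ ih => exact ih.trans (hpre k)

theorem List.exists_equiv_of_isPrefix_chain (hnd : ∀ k, (L k).Nodup)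
    (hpre : ∀ k, L k <+: L (k + 1)) (hcov : ∀ a, ∃ k, a ∈ L k)
    (hlen : ∀ n, ∃ k, n < (L k).length) :
    ∃ σ : ℕ ≃ α, ∀ k n (hn : n < (L k).length), σ n = (L k)[n] := by
  have hcompat : ∀ j k n (hj : n < (L j).length) (hk : n < (L k).length),
      (L j)[n] = (L k)[n] := fun j k n hj hk => by
    rcases le_total j k with h | h
    · exact (List.isPrefix_of_le_of_isPrefix_succ hpre h).getElem hj
    · exact ((List.isPrefix_of_le_of_isPrefix_succ hpre h).getElem hk).symm
  choose K hK using hlen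
  set f : ℕ → α := fun n => (L (K n))[n]'(hK n)
  have hf : ∀ k n (hn : n < (L k).length), f n = (L k)[n] := fun k n hn => hcompat _ _ _ _ _
  have hinj : f.Injective := fun m n hmn => by
    set k := max (K m) (K n)
    have hm : m < (L k).length := (hK m).trans_le
      (List.isPrefix_of_le_of_isPrefix_succ hpre (le_max_left _ _)).length_le
    have hn : n < (L k).length := (hK n).trans_le
      (List.isPrefix_of_le_of_isPrefix_succ hpre (le_max_right _ _)).length_le
    rwa [hf k m hm, hf k n hn, (hnd k).getElem_inj_iff] at hmn
  have hsurj : f.Surjective := fun a => by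
    obtain ⟨k, hk⟩ := hcov a
    obtain ⟨n, hn, rfl⟩ := List.getElem_of_mem hk
    exact ⟨n, hf k n hn⟩
  exact ⟨Equiv.ofBijective f ⟨hinj, hsurj⟩, hf⟩

theorem sum_range_eq_sum_map_take [AddCommMonoid E] (y : α → E) (σ : ℕ → α) (l : List α)
    (hσ : ∀ n (hn : n < l.length), σ n = l[n]) {m : ℕ} (hm : m ≤ l.length) :
    ∑ n ∈ range m, y (σ n) = ((l.take m).map y).sum := by
  induction m with
  | zero => simp
  | succ m ih =>
    rw [sum_range_succ, ih (by omega), List.map_take, List.map_take,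
      List.sum_take_succ _ _ (by simpa using hm), List.getElem_map, hσ m hm]

variable [SeminormedAddCommGroup E] {y : α → E} {s : E} {δ : ℕ → ℝ}

theorem List.norm_sum_sub_le_of_isPrefix_chain (hpre : ∀ k, L k <+: L (k + 1)) (hδ : Antitone δ)
    (hblock : ∀ k p, L k <+: p → p <+: L (k + 1) → ‖(p.map y).sum - s‖ ≤ δ k) {K k : ℕ}
    (hKk : K ≤ k) {p : List α} (hKp : L K <+: p) (hpk : p <+: L k) :
    ‖(p.map y).sum - s‖ ≤ δ K := by
  induction k, hKk using Nat.le_induction generalizing p with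
  | base =>
    rw [hpk.eq_of_length (le_antisymm hpk.length_le hKp.length_le)]
    exact hblock K _ (List.prefix_refl _) (hpre K)
  | succ k hKk ih =>
    rcases List.prefix_or_prefix_of_prefix hpk (hpre k) with h | h
    · exact ih hKp h
    · exact (hblock k p h hpk).trans (hδ hKk)

theorem exists_perm_tendsto_of_isPrefix_chain (y : ℕ → E) (s : E) (L : ℕ → List ℕ)
    (hnd : ∀ k, (L k).Nodup) (hpre : ∀ k, L k <+: L (k + 1)) (hcov : ∀ k i, i < k → i ∈ L k)
    (hδ : Antitone δ) (hδ0 : Tendsto δ atTop (𝓝 0))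
    (hblock : ∀ k p, L k <+: p → p <+: L (k + 1) → ‖(p.map y).sum - s‖ ≤ δ k) :
    ∃ σ : Equiv.Perm ℕ, Tendsto (fun m => ∑ n ∈ range m, y (σ n)) atTop (𝓝 s) := by
  classical
  have hlen : ∀ k, k ≤ (L k).length := fun k => by
    refine le_trans ?_ (L k).toFinset_card_le
    simpa using card_le_card (s := range k) fun i hi => by simpa using hcov k i (by simpa using hi)
  obtain ⟨σ, hσ⟩ := List.exists_equiv_of_isPrefix_chain hnd hpre
    (fun i => ⟨i + 1, hcov _ i (by omega)⟩) fun n => ⟨n + 1, by have := hlen (n + 1); omega⟩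
  refine ⟨σ, Metric.tendsto_atTop.mpr fun ε hε => ?_⟩
  obtain ⟨K, hK⟩ := (hδ0.eventually (gt_mem_nhds hε)).exists_forall_of_atTop
  refine ⟨(L K).length, fun m hm => ?_⟩
  have hKm : K ≤ m := (hlen K).trans hm
  rw [sum_range_eq_sum_map_take y σ (L m) (hσ m) (hlen m), dist_eq_norm]
  refine lt_of_le_of_lt (List.norm_sum_sub_le_of_isPrefix_chain hpre hδ hblock hKm ?_
    (List.take_prefix _ _)) (hK K le_rfl)
  exact List.prefix_take_iff.mpr ⟨List.isPrefix_of_le_of_isPrefix_succ hpre hKm, hm⟩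

end PrefixChain

section Rearrangement

def IsRearrangementStage {X : Type*} [NormedAddCommGroup X] (y : ℕ → X) (a v : X) (ε : ℝ) (N : ℕ)
    (L : List ℕ) : Prop :=
  L.Nodup ∧ (∀ i < N, i ∈ L) ∧ (∀ i, N ≤ i → ‖y i‖ ≤ ε) ∧ ‖(L.map y).sum - (a + v)‖ ≤ ε

theorem exists_isRearrangementStage_zero {X : Type*} [NormedAddCommGroup X] {y : ℕ → X}
    (hy : Tendsto y atTop (𝓝 0)) (a v : X) : ∃ ε₀ > 0, IsRearrangementStage y a v ε₀ 0 [] := by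
  obtain ⟨R, hR⟩ := hy.norm.bddAbove_range
  refine ⟨max R ‖a + v‖ + 1, by positivity, List.nodup_nil, by simp,
    fun i _ => (hR ⟨i, rfl⟩).trans ?_, ?_⟩
  · exact le_add_of_le_of_nonneg (le_max_left _ _) zero_le_one
  · rw [List.map_nil, List.sum_nil, zero_sub, norm_neg]
    exact le_add_of_le_of_nonneg (le_max_right _ _) zero_le_one

variable {X : Type*} [NormedAddCommGroup X] [NormedSpace ℝ X] [FiniteDimensional ℝ X]

theorem eventually_exists_tail_finset_approx {y : ℕ → X} {a v : X}
    (hS : Tendsto (fun m => ∑ n ∈ range m, y n) atTop (𝓝 a)) (hy : Tendsto y atTop (𝓝 0))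
    (hv : ∀ f : StrongDual ℝ X, Summable (fun n => |f (y n)|) → f v = 0) {ε : ℝ} (hε : 0 < ε) :
    ∀ᶠ N in atTop, ‖∑ n ∈ range N, y n - a‖ ≤ ε / 2 ∧ (∀ i, N ≤ i → ‖y i‖ ≤ ε) ∧
      ∃ G : Finset ℕ, (∀ i ∈ G, N ≤ i) ∧ ‖∑ i ∈ G, y i - v‖ ≤ ε / 2 := by
  set d : ℝ := (Module.finrank ℝ X : ℝ)
  have hd : 0 ≤ d := Nat.cast_nonneg _
  have hη : 0 < ε / (2 * (d + 1)) := by positivity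
  filter_upwards [hS.eventually (Metric.closedBall_mem_nhds a (half_pos hε)),
    eventually_forall_ge_atTop.mpr (hy.eventually (Metric.closedBall_mem_nhds 0 hη))]
    with N hSN hyN
  simp only [dist_eq_norm, sub_zero] at hSN hyN
  obtain ⟨G, hGN, hG⟩ :=
    exists_tail_finset_norm_sum_sub_le (mem_closure_tailZonotope hS hv N) hη hyN
  refine ⟨hSN, fun i hi => (hyN i hi).trans (div_le_self hε.le (by linarith)),
    G, hGN, hG.trans (le_of_eq ?_)⟩
  simp only [d]
  field_simp

theorem sum_range_sdiff_union_eq {M : Type*} [AddCommGroup M] (y : ℕ → M) {L : List ℕ}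
    (hL : L.Nodup) {N : ℕ} (hLN : ∀ i ∈ L, i < N) {G : Finset ℕ} (hGN : ∀ i ∈ G, N ≤ i) :
    ∑ i ∈ (range N \ L.toFinset) ∪ G, y i = ∑ n ∈ range N, y n - (L.map y).sum + ∑ i ∈ G, y i := by
  have hdisj : Disjoint (range N \ L.toFinset) G := disjoint_left.mpr fun i hi hiG =>
    (mem_range.mp (mem_sdiff.mp hi).1).not_ge (hGN i hiG)
  rw [sum_union hdisj, sum_sdiff_eq_sub fun i hi => mem_range.mpr (hLN i (List.mem_toFinset.mp hi)),
    List.sum_toFinset _ hL]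

theorem disjoint_toFinset_range_sdiff_union {L : List ℕ} {N : ℕ} (hLN : ∀ i ∈ L, i < N)
    {G : Finset ℕ} (hGN : ∀ i ∈ G, N ≤ i) : Disjoint L.toFinset ((range N \ L.toFinset) ∪ G) :=
  disjoint_left.mpr fun i hiL hi => by
    rcases mem_union.mp hi with hi | hi
    · exact (mem_sdiff.mp hi).2 hiL
    · exact (hLN i (List.mem_toFinset.mp hiL)).not_ge (hGN i hi)

theorem IsRearrangementStage.exists_extend {y : ℕ → X} {a v : X}
    (hS : Tendsto (fun m => ∑ n ∈ range m, y n) atTop (𝓝 a)) (hy : Tendsto y atTop (𝓝 0))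
    (hv : ∀ f : StrongDual ℝ X, Summable (fun n => |f (y n)|) → f v = 0)
    {ε ε' : ℝ} {N : ℕ} {L : List ℕ} (hL : IsRearrangementStage y a v ε N L) (hε' : 0 < ε')
    (hε'ε : ε' ≤ ε) :
    ∃ N' L', N < N' ∧ IsRearrangementStage y a v ε' N' L' ∧ L <+: L' ∧
      ∀ p, L <+: p → p <+: L' →
        ‖(p.map y).sum - (a + v)‖ ≤ 3 * (Module.finrank ℝ X + 1) * ε := by
  classical
  obtain ⟨hnd, hcov, hsmall, hclose⟩ := hL
  obtain ⟨N', ⟨hSN', hyN', G, hGN', hG⟩, hNN', hLN'⟩ :=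
    ((eventually_exists_tail_finset_approx hS hy hv hε').and ((eventually_gt_atTop N).and
      ((L.toFinset.eventually_all (l := atTop)).mpr fun i _ => eventually_gt_atTop i))).exists
  simp only [List.mem_toFinset] at hLN'
  -- the next block: the indices below `N'` not used so far, and a tail set with sum close to `v`
  set B := (range N' \ L.toFinset) ∪ G
  have hBsum : ∑ i ∈ B, y i =
      (∑ n ∈ range N', y n - a) - ((L.map y).sum - (a + v)) + (∑ i ∈ G, y i - v) := by
    rw [sum_range_sdiff_union_eq y hnd hLN' hGN']
    abel
  have hBnorm : ‖∑ i ∈ B, y i‖ ≤ 2 * ε := by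
    rw [hBsum]
    linarith [norm_add_le (∑ n ∈ range N', y n - a - ((L.map y).sum - (a + v)))
      (∑ i ∈ G, y i - v), norm_sub_le (∑ n ∈ range N', y n - a) ((L.map y).sum - (a + v))]
  have hBsmall : ∀ i ∈ B, ‖y i‖ ≤ ε := fun i hi => hsmall i <| by
    rcases mem_union.mp hi with hi | hi
    · by_contra! h
      exact (mem_sdiff.mp hi).2 (List.mem_toFinset.mpr (hcov i h))
    · exact hNN'.le.trans (hGN' i hi)
  have hLB : Disjoint L.toFinset B := disjoint_toFinset_range_sdiff_union hLN' hGN'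
  obtain ⟨lB, hlB, hlBB, hlBp⟩ := B.exists_nodup_prefix_norm_sum_le_of_norm_sum_le y
    ((norm_nonneg _).trans hclose) hBsmall hBnorm
  refine ⟨N', L ++ lB, hNN', ⟨hnd.append hlB (List.disjoint_toFinset_iff_disjoint.mp (hlBB ▸ hLB)),
    fun i hi => ?_, hyN', ?_⟩, List.prefix_append _ _, fun p hLp hpL => ?_⟩
  · by_cases hiL : i ∈ L
    · exact List.mem_append_left _ hiL
    · refine List.mem_append_right _ (List.mem_toFinset.mp ?_)
      rw [hlBB]
      exact mem_union_left _ (mem_sdiff.mpr ⟨mem_range.mpr hi, by simpa using hiL⟩)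
  · rw [List.map_append, List.sum_append, ← List.sum_toFinset _ hlB, hlBB, hBsum]
    calc _ = ‖(∑ n ∈ range N', y n - a) + (∑ i ∈ G, y i - v)‖ := by congr 1; abel
      _ ≤ ε' := (norm_add_le _ _).trans (by linarith)
  · obtain ⟨q, rfl⟩ := hLp
    rw [List.map_append, List.sum_append]
    calc _ = ‖((L.map y).sum - (a + v)) + (q.map y).sum‖ := by congr 1; abel
      _ ≤ ε + (Module.finrank ℝ X * (ε + 2 * ε) + 2 * ε) := (norm_add_le _ _).trans
          (add_le_add hclose (hlBp q ((List.prefix_append_right_inj L).mp hpL)))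
      _ = 3 * (Module.finrank ℝ X + 1) * ε := by ring

theorem exists_perm_tendsto_add_of_forall_summable_abs {y : ℕ → X} {a v : X}
    (hS : Tendsto (fun m => ∑ n ∈ range m, y n) atTop (𝓝 a))
    (hv : ∀ f : StrongDual ℝ X, Summable (fun n => |f (y n)|) → f v = 0) :
    ∃ ρ : Equiv.Perm ℕ, Tendsto (fun m => ∑ n ∈ range m, y (ρ n)) atTop (𝓝 (a + v)) := by
  have hy : Tendsto y atTop (𝓝 0) := by
    simpa [sum_range_succ_sub_sum] using (hS.comp (tendsto_add_atTop_nat 1)).sub hS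
  obtain ⟨ε₀, hε₀, hstart⟩ := exists_isRearrangementStage_zero hy a v
  set η : ℕ → ℝ := fun k => ε₀ * (1 / 2) ^ k
  have hη : ∀ k, 0 < η k := fun k => by positivity
  have hstep : ∀ k (s : ℕ × List ℕ), IsRearrangementStage y a v (η k) s.1 s.2 →
      ∃ s' : ℕ × List ℕ, s.1 < s'.1 ∧ IsRearrangementStage y a v (η (k + 1)) s'.1 s'.2 ∧
        s.2 <+: s'.2 ∧ ∀ p, s.2 <+: p → p <+: s'.2 →
          ‖(p.map y).sum - (a + v)‖ ≤ 3 * (Module.finrank ℝ X + 1) * η k :=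
    fun k s hs => by
      obtain ⟨N', L', h⟩ := hs.exists_extend hS hy hv (hη (k + 1))
        (by simp only [η, pow_succ]; nlinarith [hη k])
      exact ⟨(N', L'), h⟩
  choose! next hnext using hstep
  set stage : ℕ → ℕ × List ℕ := fun k => Nat.rec (0, []) next k
  have hstage : ∀ k, IsRearrangementStage y a v (η k) (stage k).1 (stage k).2 := fun k => by
    induction k with
    | zero => simpa [η, stage] using hstart
    | succ k ih => exact (hnext k _ ih).2.1
  have hN : ∀ k, k ≤ (stage k).1 := fun k => by
    induction k with
    | zero => exact Nat.zero_le _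
    | succ k ih => exact Nat.succ_le_of_lt (ih.trans_lt (hnext k _ (hstage k)).1)
  exact exists_perm_tendsto_of_isPrefix_chain y (a + v) (fun k => (stage k).2)
    (fun k => (hstage k).1) (fun k => (hnext k _ (hstage k)).2.2.1)
    (fun k i hi => (hstage k).2.1 i (hi.trans_le (hN k)))
    (fun j k hjk => mul_le_mul_of_nonneg_left (mul_le_mul_of_nonneg_left
      (pow_le_pow_of_le_one (by norm_num) (by norm_num) hjk) hε₀.le) (by positivity))
    (by simpa only [mul_zero] using ((tendsto_pow_atTop_nhds_zero_of_lt_one (r := (1 / 2 : ℝ))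
      (by norm_num) (by norm_num)).const_mul ε₀).const_mul (3 * (Module.finrank ℝ X + 1 : ℝ)))
    (fun k => (hnext k _ (hstage k)).2.2.2)

end Rearrangement

theorem StrongDual.apply_eq_tsum_of_tendsto_sum_perm {E : Type*} [NormedAddCommGroup E]
    [NormedSpace ℝ E] (f : StrongDual ℝ E) {x : ℕ → E} (hf : Summable fun n => f (x n))
    {π : Equiv.Perm ℕ} {c : E}
    (hc : Tendsto (fun m => ∑ n ∈ range m, x (π n)) atTop (𝓝 c)) : f c = ∑' n, f (x n) := by
  refine tendsto_nhds_unique ?_ ((π.hasSum_iff.mpr hf.hasSum).tendsto_sum_nat)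
  simpa [map_sum, Function.comp_def] using (f.continuous.tendsto c).comp hc

theorem stmt19_general
    {X : Type*} [NormedAddCommGroup X] [NormedSpace ℝ X] [FiniteDimensional ℝ X]
    (x : ℕ → X)
    (a b : X) (t : ℝ)
    (ha : a ∈ {s : X | ∃ σ : Equiv.Perm ℕ,
      Tendsto (fun m => ∑ n ∈ Finset.range m, x (σ n)) atTop (𝓝 s)})
    (hb : b ∈ {s : X | ∃ σ : Equiv.Perm ℕ,
      Tendsto (fun m => ∑ n ∈ Finset.range m, x (σ n)) atTop (𝓝 s)}) :
    (1 - t) • a + t • b ∈ {s : X | ∃ σ : Equiv.Perm ℕ,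
      Tendsto (fun m => ∑ n ∈ Finset.range m, x (σ n)) atTop (𝓝 s)} := by
  obtain ⟨σ, hσ⟩ := ha
  obtain ⟨τ, hτ⟩ := hb
  have hv : ∀ f : StrongDual ℝ X, Summable (fun n => |f (x (σ n))|) → f (t • (b - a)) = 0 :=
    fun f hf => by
      have hfx : Summable fun n => |f (x n)| := σ.summable_iff.mp hf
      replace hfx := hfx.of_abs
      rw [map_smul, map_sub, f.apply_eq_tsum_of_tendsto_sum_perm hfx hτ,
        f.apply_eq_tsum_of_tendsto_sum_perm hfx hσ, sub_self, smul_zero]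
  obtain ⟨ρ, hρ⟩ := exists_perm_tendsto_add_of_forall_summable_abs hσ hv
  refine ⟨ρ.trans σ, ?_⟩
  rwa [show (1 - t) • a + t • b = a + t • (b - a) by module]

theorem stmt19
    {X : Type*} [NormedAddCommGroup X] [NormedSpace ℝ X] [FiniteDimensional ℝ X]
    (x : ℕ → X)
    (hne : {s : X | ∃ σ : Equiv.Perm ℕ,
      Tendsto (fun m => ∑ n ∈ Finset.range m, x (σ n)) atTop (𝓝 s)}.Nonempty)
    (a b : X) (t : ℝ)
    (ha : a ∈ {s : X | ∃ σ : Equiv.Perm ℕ,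
      Tendsto (fun m => ∑ n ∈ Finset.range m, x (σ n)) atTop (𝓝 s)})
    (hb : b ∈ {s : X | ∃ σ : Equiv.Perm ℕ,
      Tendsto (fun m => ∑ n ∈ Finset.range m, x (σ n)) atTop (𝓝 s)}) :
    (1 - t) • a + t • b ∈ {s : X | ∃ σ : Equiv.Perm ℕ,
      Tendsto (fun m => ∑ n ∈ Finset.range m, x (σ n)) atTop (𝓝 s)} :=
  stmt19_general x a b t ha hb
end
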